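/- arXiv:2111.10849 — 3 statements merged into one kernel-verified Lean document; each statement's English description precedes it below -/
import Mathlib

section
/- Let 1 < p < ∞ and τ > 0, and fix x₀, ξ₀ ∈ ℝⁿ. Then for all u ∈ L^p(ℝⁿ) and v ∈ L^{p'}(ℝⁿ), where 1/p + 1/p' = 1, the pairing (R_{λ,τ}(x₀,ξ₀)u, v) = ∫_{ℝⁿ} (R_{λ,τ}(x₀,ξ₀)u)(x) \overline{v(x)} dx tends to 0 as λ → ∞. -/
open MeasureTheory Real Filter
open scoped RealInnerProductSpace BigOperators ENNReal

noncomputable section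

/-- Euclidean space ℝⁿ. -/
abbrev En (n : ℕ) : Type := EuclideanSpace ℝ (Fin n)

/-- Partial derivative in the `i`-th coordinate direction. -/
def pd {n : ℕ} {F : Type*} [NormedAddCommGroup F] [NormedSpace ℝ F]
    (i : Fin n) (f : En n → F) : En n → F :=
  fun x => fderiv ℝ f x (EuclideanSpace.single i 1)

/-- Iterated partial derivative `∂^α` for a multi-index `α`. -/
def mpd {n : ℕ} {F : Type*} [NormedAddCommGroup F] [NormedSpace ℝ F]
    (α : Fin n → ℕ) (f : En n → F) : En n → F :=
  (List.finRange n).foldr (fun i g => (pd i)^[α i] g) f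

/-- Mixed derivative `∂_x^α ∂_ξ^β σ` of a symbol. -/
def mixpd {n : ℕ} (α β : Fin n → ℕ) (σ : En n → En n → ℂ) : En n → En n → ℂ :=
  fun x ξ => mpd α (fun y => mpd β (σ y) ξ) x

/-- `Λ` is a weight function of polynomial growth with parameters `μ₀ ≤ μ₁ ≤ μ`. -/
structure IsWeight (n : ℕ) (Λ : En n → ℝ) (μ₀ μ₁ μ : ℝ) : Prop where
  pos : ∀ ξ, 0 < Λ ξ
  smooth : ContDiff ℝ (⊤ : ℕ∞) Λ
  growth : ∃ C₀ C₁ : ℝ, 0 < C₀ ∧ C₀ ≤ C₁ ∧ ∀ ξ : En n,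
    C₀ * (1 + ‖ξ‖) ^ μ₀ ≤ Λ ξ ∧ Λ ξ ≤ C₁ * (1 + ‖ξ‖) ^ μ₁
  hμ₀ : 0 < μ₀
  hμ₀₁ : μ₀ ≤ μ₁
  hμ₁ : μ₁ ≤ μ
  deriv_bound : ∀ (α γ : Fin n → ℕ), (∀ i, γ i ≤ 1) →
    ∃ C > 0, ∀ ξ : En n,
      |(∏ i, ξ i ^ γ i) * mpd (α + γ) Λ ξ| ≤ C * Λ ξ ^ (1 - (∑ i, (α i : ℝ)) / μ)

/-- The symbol class `S^m_{ρ,Λ}`. -/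
def SClass {n : ℕ} (Λ : En n → ℝ) (ρ m : ℝ) (σ : En n → En n → ℂ) : Prop :=
  ContDiff ℝ (⊤ : ℕ∞) (fun q : En n × En n => σ q.1 q.2) ∧
  ∀ α β : Fin n → ℕ, ∃ C > 0, ∀ x ξ : En n,
    ‖mixpd α β σ x ξ‖ ≤ C * Λ ξ ^ (m - ρ * ∑ i, (β i : ℝ))

/-- The symbol class `M^m_{ρ,Λ}`. -/
def MClass {n : ℕ} (Λ : En n → ℝ) (ρ m : ℝ) (σ : En n → En n → ℂ) : Prop :=
  ∀ γ : Fin n → ℕ, (∀ i, γ i ≤ 1) →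
    SClass Λ ρ m (fun x ξ => ((∏ i, ξ i ^ γ i : ℝ) : ℂ) * mixpd 0 γ σ x ξ)

/-- The Fourier transform `φ̂(ξ) = (2π)^{-n/2} ∫ e^{-ix·ξ} φ(x) dx`. -/
def ft {n : ℕ} (φ : En n → ℂ) (ξ : En n) : ℂ :=
  (((2 * Real.pi) ^ (-(n : ℝ) / 2) : ℝ) : ℂ) *
    ∫ (x : En n), Complex.exp (-Complex.I * (⟪x, ξ⟫ : ℂ)) * φ x

/-- The pseudo-differential operator `T_σ`. -/
def pdo {n : ℕ} (σ : En n → En n → ℂ) (φ : En n → ℂ) (x : En n) : ℂ :=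
  (((2 * Real.pi) ^ (-(n : ℝ) / 2) : ℝ) : ℂ) *
    ∫ (ξ : En n), Complex.exp (Complex.I * (⟪x, ξ⟫ : ℂ)) * σ x ξ * ft φ ξ

end

noncomputable section

/-- The SG symbol class `S^{m₁,m₂}_{ρ,Λ}`. -/
def SGClass {n : ℕ} (Λ : En n → ℝ) (ρ m₁ m₂ : ℝ) (σ : En n → En n → ℂ) : Prop :=
  ContDiff ℝ (⊤ : ℕ∞) (fun q : En n × En n => σ q.1 q.2) ∧
  ∀ α β : Fin n → ℕ, ∃ C > 0, ∀ x ξ : En n,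
    ‖mixpd α β σ x ξ‖ ≤
      C * Λ x ^ (m₂ - ρ * ∑ i, (α i : ℝ)) * Λ ξ ^ (m₁ - ρ * ∑ i, (β i : ℝ))

/-- The SG symbol class `M^{m₁,m₂}_{ρ,Λ}`. -/
def SGMClass {n : ℕ} (Λ : En n → ℝ) (ρ m₁ m₂ : ℝ) (σ : En n → En n → ℂ) : Prop :=
  ∀ γ δ : Fin n → ℕ, (∀ i, γ i ≤ 1) → (∀ i, δ i ≤ 1) →
    SGClass Λ ρ m₁ m₂ (fun x ξ =>
      ((∏ i, x i ^ δ i : ℝ) : ℂ) * ((∏ i, ξ i ^ γ i : ℝ) : ℂ) * mixpd δ γ σ x ξ)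

end

/-! `R_{λ,τ}(x₀,ξ₀)` is an isometry of `L^p`, so by Hölder's inequality the pairings
`(R_{λ,τ}(x₀,ξ₀)u, v)` are bounded by `‖u‖_p ‖v‖_{p'}` uniformly in `λ`, and by density it
suffices to treat continuous compactly supported `u` and `v`. For those, bounding `v` by its
supremum and changing variables gives
`|(R_{λ,τ}(x₀,ξ₀)u, v)| ≤ λ^{τn/p - τn} ‖v‖_∞ ‖u‖_1`, which tends to `0` since `p > 1`, `n ≥ 1`. -/

open Complex Module Topology ComplexConjugate

theorem tendsto_zero_of_forall_approx {α G : Type*} [SeminormedAddCommGroup G] {l : Filter α}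
    {F : α → G} (h : ∀ ε > 0, ∃ F' : α → G, Tendsto F' l (𝓝 0) ∧ ∀ᶠ a in l, ‖F a - F' a‖ ≤ ε) :
    Tendsto F l (𝓝 0) := by
  rw [Metric.tendsto_nhds]
  intro ε hε
  obtain ⟨F', hF', hFF'⟩ := h (ε / 2) (half_pos hε)
  filter_upwards [hFF', Metric.tendsto_nhds.1 hF' (ε / 2) (half_pos hε)] with a hclose hsmall
  rw [dist_zero_right] at hsmall ⊢
  linarith [norm_le_norm_sub_add (F a) (F' a)]

namespace MeasureTheory

section
variable {α : Type*} [MeasurableSpace α] {ν : Measure α} {p q : ℝ} {f w : α → ℂ}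

theorem MemLp.integrable_mul_conj (hpq : p.HolderConjugate q) (hf : MemLp f (.ofReal p) ν)
    (hw : MemLp w (.ofReal q) ν) : Integrable (fun x => f x * conj (w x)) ν := by
  have := hpq.ennrealOfReal
  rw [← memLp_one_iff_integrable]
  exact hw.star.smul hf

theorem norm_integral_mul_conj_le (hpq : p.HolderConjugate q) (hf : MemLp f (.ofReal p) ν)
    (hw : MemLp w (.ofReal q) ν) :
    ‖∫ x, f x * conj (w x) ∂ν‖ ≤ lpNorm f (.ofReal p) ν * lpNorm w (.ofReal q) ν := by
  calc ‖∫ x, f x * conj (w x) ∂ν‖ ≤ ∫ x, ‖f x‖ * ‖w x‖ ∂ν := by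
        simpa only [norm_mul, RCLike.norm_conj] using
          norm_integral_le_integral_norm (fun x => f x * conj (w x))
    _ ≤ (∫ x, ‖f x‖ ^ p ∂ν) ^ (1 / p) * (∫ x, ‖w x‖ ^ q ∂ν) ^ (1 / q) :=
        integral_mul_norm_le_Lp_mul_Lq hpq hf hw
    _ = lpNorm f (.ofReal p) ν * lpNorm w (.ofReal q) ν := by
        rw [lpNorm_eq_integral_norm_rpow_toReal (by simp [hpq.pos]) ENNReal.ofReal_ne_top hf.1,
          lpNorm_eq_integral_norm_rpow_toReal (by simp [hpq.symm.pos]) ENNReal.ofReal_ne_top hw.1,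
          ENNReal.toReal_ofReal hpq.nonneg, ENNReal.toReal_ofReal hpq.symm.nonneg, one_div, one_div]

end

section
variable {E F : Type*} [NormedAddCommGroup E] [NormedSpace ℝ E] [FiniteDimensional ℝ E]
  [MeasurableSpace E] [BorelSpace E] {μ : Measure E} [μ.IsAddHaarMeasure]
  [NormedAddCommGroup F]

theorem eLpNorm_comp_smul_sub {f : E → F} (hf : AEStronglyMeasurable f μ) (p : ℝ≥0∞)
    {s : ℝ} (hs : s ≠ 0) (x₀ : E) :
    eLpNorm (fun x => f (s • (x - x₀))) p μ =
      ENNReal.ofReal |(s ^ finrank ℝ E)⁻¹| ^ (1 / p).toReal * eLpNorm f p μ := by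
  have hmap := μ.map_addHaar_smul hs
  have hc : ENNReal.ofReal |(s ^ finrank ℝ E)⁻¹| ≠ 0 := by
    simp [hs]
  calc eLpNorm (fun x => f (s • (x - x₀))) p μ = eLpNorm (f ∘ (s • ·)) p μ :=
        eLpNorm_comp_measurePreserving (g := f ∘ (s • ·))
          (hf.comp_quasiMeasurePreserving (Measure.quasiMeasurePreserving_smul μ hs))
          (measurePreserving_sub_right μ x₀)
    _ = eLpNorm f p (Measure.map (s • ·) μ) :=
        (eLpNorm_map_measure (by rw [hmap]; exact hf.smul_measure _)
          (continuous_const_smul s).aemeasurable).symm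
    _ = _ := by rw [hmap, eLpNorm_smul_measure_of_ne_zero hc, smul_eq_mul]

theorem AEStronglyMeasurable.comp_smul_sub {f : E → F} (hf : AEStronglyMeasurable f μ)
    {s : ℝ} (hs : s ≠ 0) (x₀ : E) : AEStronglyMeasurable (fun x => f (s • (x - x₀))) μ :=
  (hf.comp_quasiMeasurePreserving (Measure.quasiMeasurePreserving_smul μ hs))
    |>.comp_quasiMeasurePreserving (measurePreserving_sub_right μ x₀).quasiMeasurePreserving

theorem MemLp.comp_smul_sub {f : E → F} {p : ℝ≥0∞} (hf : MemLp f p μ)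
    {s : ℝ} (hs : s ≠ 0) (x₀ : E) : MemLp (fun x => f (s • (x - x₀))) p μ := by
  refine ⟨hf.1.comp_smul_sub hs x₀, ?_⟩
  rw [eLpNorm_comp_smul_sub hf.1 p hs x₀]
  exact ENNReal.mul_lt_top (ENNReal.rpow_lt_top_of_nonneg ENNReal.toReal_nonneg
    ENNReal.ofReal_ne_top) hf.2

theorem integral_comp_smul_sub [NormedSpace ℝ F] (f : E → F) (s : ℝ) (x₀ : E) :
    ∫ x, f (s • (x - x₀)) ∂μ = |(s ^ finrank ℝ E)⁻¹| • ∫ x, f x ∂μ := by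
  rw [integral_sub_right_eq_self (fun y => f (s • y)) x₀, Measure.integral_comp_smul]

end

theorem MemLp.exists_hasCompactSupport_lpNorm_sub_le {α F : Type*} [TopologicalSpace α]
    [NormalSpace α] [MeasurableSpace α] [BorelSpace α] [R1Space α] [WeaklyLocallyCompactSpace α]
    {μ : Measure α} [μ.Regular] [NormedAddCommGroup F] [NormedSpace ℝ F] {p : ℝ≥0∞}
    (hp : p ≠ ∞) {f : α → F} (hf : MemLp f p μ) {δ : ℝ} (hδ : 0 < δ) :
    ∃ g : α → F, HasCompactSupport g ∧ lpNorm (f - g) p μ ≤ δ ∧ Continuous g ∧ MemLp g p μ := by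
  obtain ⟨g, hgc, hclose, hg, hgp⟩ :=
    hf.exists_hasCompactSupport_eLpNorm_sub_le hp (ENNReal.ofReal_pos.2 hδ).ne'
  refine ⟨g, hgc, ?_, hg, hgp⟩
  rw [← toReal_eLpNorm (hf.sub hgp).1]
  exact ENNReal.toReal_le_of_le_ofReal hδ.le hclose

end MeasureTheory

section
variable {E : Type*} [NormedAddCommGroup E] [InnerProductSpace ℝ E]

-- `Rop τ p x₀ ξ₀ l` is the paper's `R_{l,τ}(x₀,ξ₀)` acting on `L^p`, with `n = finrank ℝ E`.
noncomputable def Rop (τ p : ℝ) (x₀ ξ₀ : E) (l : ℝ) (f : E → ℂ) (x : E) : ℂ :=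
  ((l ^ (τ * finrank ℝ E / p) : ℝ) : ℂ) * exp (I * ((l * ⟪x, ξ₀⟫ : ℝ) : ℂ)) *
    f ((l ^ τ : ℝ) • (x - x₀))

variable {τ p q l : ℝ} {x₀ ξ₀ : E} {f g w h : E → ℂ}

theorem norm_Rop_apply (hl : 0 ≤ l) (x : E) :
    ‖Rop τ p x₀ ξ₀ l f x‖ = l ^ (τ * finrank ℝ E / p) * ‖f ((l ^ τ : ℝ) • (x - x₀))‖ := by
  rw [Rop, norm_mul, norm_mul, norm_exp_I_mul_ofReal, mul_one, norm_real,
    norm_of_nonneg (by positivity)]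

theorem Rop_sub : Rop τ p x₀ ξ₀ l (f - g) = Rop τ p x₀ ξ₀ l f - Rop τ p x₀ ξ₀ l g := by
  ext x; simp only [Rop, Pi.sub_apply]; ring

variable [FiniteDimensional ℝ E] [MeasurableSpace E] [BorelSpace E] {μ : Measure E}
  [μ.IsAddHaarMeasure]

theorem aestronglyMeasurable_Rop (hf : AEStronglyMeasurable f μ) (hl : 0 < l) :
    AEStronglyMeasurable (Rop τ p x₀ ξ₀ l f) μ :=
  have hphase : Continuous fun x : E =>
      ((l ^ (τ * finrank ℝ E / p) : ℝ) : ℂ) * exp (I * ((l * ⟪x, ξ₀⟫ : ℝ) : ℂ)) := by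
    fun_prop
  hphase.aestronglyMeasurable.mul (hf.comp_smul_sub (rpow_pos_of_pos hl τ).ne' x₀)

theorem eLpNorm_Rop (hf : AEStronglyMeasurable f μ) (hp : 0 < p) (hl : 0 < l) :
    eLpNorm (Rop τ p x₀ ξ₀ l f) (.ofReal p) μ = eLpNorm f (.ofReal p) μ := by
  have hs : l ^ τ ≠ 0 := (rpow_pos_of_pos hl τ).ne'
  have hnorm : eLpNorm (Rop τ p x₀ ξ₀ l f) (.ofReal p) μ = eLpNorm
      (((l ^ (τ * finrank ℝ E / p) : ℝ) : ℂ) • fun x => f ((l ^ τ : ℝ) • (x - x₀))) (.ofReal p) μ :=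
    eLpNorm_congr_norm_ae (.of_forall fun x => by
      rw [norm_Rop_apply hl.le, Pi.smul_apply, norm_smul, norm_real,
        norm_of_nonneg (by positivity)])
  have hconst : ‖((l ^ (τ * finrank ℝ E / p) : ℝ) : ℂ)‖ₑ *
      ENNReal.ofReal |((l ^ τ) ^ finrank ℝ E)⁻¹| ^ (1 / ENNReal.ofReal p).toReal = 1 := by
    have hscale : ((l ^ τ) ^ finrank ℝ E)⁻¹ = l ^ (-(τ * finrank ℝ E)) := by
      rw [← rpow_natCast, ← rpow_mul hl.le, rpow_neg hl.le]
    have hinv : (1 / ENNReal.ofReal p).toReal = p⁻¹ := by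
      rw [one_div, ENNReal.toReal_inv, ENNReal.toReal_ofReal hp.le]
    rw [hinv, hscale, abs_of_pos (rpow_pos_of_pos hl _), ← ofReal_norm, norm_real,
      norm_of_nonneg (by positivity), ENNReal.ofReal_rpow_of_nonneg (by positivity) (by positivity),
      ← ENNReal.ofReal_mul (by positivity), ← rpow_mul hl.le, ← rpow_add hl, ← ENNReal.ofReal_one]
    congr 1
    convert rpow_zero l using 2
    ring
  rw [hnorm, eLpNorm_const_smul, eLpNorm_comp_smul_sub hf _ hs, ← mul_assoc, hconst, one_mul]

theorem memLp_Rop (hf : MemLp f (.ofReal p) μ) (hp : 0 < p) (hl : 0 < l) :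
    MemLp (Rop τ p x₀ ξ₀ l f) (.ofReal p) μ :=
  ⟨aestronglyMeasurable_Rop hf.1 hl, by rw [eLpNorm_Rop hf.1 hp hl]; exact hf.2⟩

theorem lpNorm_Rop (hf : AEStronglyMeasurable f μ) (hp : 0 < p) (hl : 0 < l) :
    lpNorm (Rop τ p x₀ ξ₀ l f) (.ofReal p) μ = lpNorm f (.ofReal p) μ := by
  rw [← toReal_eLpNorm hf, ← toReal_eLpNorm (aestronglyMeasurable_Rop hf hl), eLpNorm_Rop hf hp hl]

theorem norm_integral_Rop_mul_conj_le (hpq : p.HolderConjugate q) (hf : MemLp f (.ofReal p) μ)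
    (hw : MemLp w (.ofReal q) μ) (hl : 0 < l) :
    ‖∫ x, Rop τ p x₀ ξ₀ l f x * conj (w x) ∂μ‖ ≤ lpNorm f (.ofReal p) μ * lpNorm w (.ofReal q) μ :=
  (norm_integral_mul_conj_le hpq (memLp_Rop hf hpq.pos hl) hw).trans_eq
    (by rw [lpNorm_Rop hf.1 hpq.pos hl])

theorem norm_integral_Rop_mul_conj_sub_le (hpq : p.HolderConjugate q)
    (hf : MemLp f (.ofReal p) μ) (hg : MemLp g (.ofReal p) μ)
    (hw : MemLp w (.ofReal q) μ) (hh : MemLp h (.ofReal q) μ) (hl : 0 < l) :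
    ‖∫ x, Rop τ p x₀ ξ₀ l f x * conj (w x) ∂μ - ∫ x, Rop τ p x₀ ξ₀ l g x * conj (h x) ∂μ‖ ≤
      lpNorm (f - g) (.ofReal p) μ * lpNorm w (.ofReal q) μ +
        lpNorm g (.ofReal p) μ * lpNorm (w - h) (.ofReal q) μ := by
  have hRf := memLp_Rop (τ := τ) (x₀ := x₀) (ξ₀ := ξ₀) hf hpq.pos hl
  have hRg := memLp_Rop (τ := τ) (x₀ := x₀) (ξ₀ := ξ₀) hg hpq.pos hl
  have hsplit :
      ∫ x, Rop τ p x₀ ξ₀ l f x * conj (w x) ∂μ - ∫ x, Rop τ p x₀ ξ₀ l g x * conj (h x) ∂μ =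
      ∫ x, Rop τ p x₀ ξ₀ l (f - g) x * conj (w x) ∂μ +
        ∫ x, Rop τ p x₀ ξ₀ l g x * conj ((w - h) x) ∂μ := by
    rw [← integral_sub (hRf.integrable_mul_conj hpq hw) (hRg.integrable_mul_conj hpq hh),
      ← integral_add ((memLp_Rop (hf.sub hg) hpq.pos hl).integrable_mul_conj hpq hw)
        (hRg.integrable_mul_conj hpq (hw.sub hh))]
    congr 1 with x
    simp only [Rop_sub, Pi.sub_apply, map_sub]
    ring
  rw [hsplit]
  exact (norm_add_le _ _).trans (add_le_add
    (norm_integral_Rop_mul_conj_le hpq (hf.sub hg) hw hl)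
    (norm_integral_Rop_mul_conj_le hpq hg (hw.sub hh) hl))

theorem norm_integral_Rop_mul_conj_le_of_bound (hg : Integrable g μ) {C : ℝ}
    (hh : ∀ x, ‖h x‖ ≤ C) (hl : 0 < l) :
    ‖∫ x, Rop τ p x₀ ξ₀ l g x * conj (h x) ∂μ‖ ≤
      l ^ (τ * finrank ℝ E / p - τ * finrank ℝ E) * C * ∫ x, ‖g x‖ ∂μ := by
  have hs : l ^ τ ≠ 0 := (rpow_pos_of_pos hl τ).ne'
  have hbound : Integrable (fun x => l ^ (τ * finrank ℝ E / p) * C * ‖g ((l ^ τ) • (x - x₀))‖) μ :=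
    (memLp_one_iff_integrable.1 ((memLp_one_iff_integrable.2 hg).comp_smul_sub hs x₀)).norm
      |>.const_mul _
  refine (norm_integral_le_of_norm_le hbound (.of_forall fun x => ?_)).trans_eq ?_
  · rw [norm_mul, norm_Rop_apply hl.le, RCLike.norm_conj, mul_right_comm _ C]
    gcongr
    exact hh x
  · rw [integral_const_mul, integral_comp_smul_sub (fun y => ‖g y‖), smul_eq_mul,
      abs_of_pos (by positivity), ← rpow_natCast, ← rpow_mul hl.le, ← rpow_neg hl.le,
      sub_eq_add_neg, rpow_add hl]
    ring

theorem tendsto_integral_Rop_mul_conj_of_hasCompactSupport (hτ : 0 < τ) (hp : 1 < p)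
    (hd : 0 < finrank ℝ E) (hg : Continuous g) (hgc : HasCompactSupport g) (hh : Continuous h)
    (hhc : HasCompactSupport h) :
    Tendsto (fun l => ∫ x, Rop τ p x₀ ξ₀ l g x * conj (h x) ∂μ) atTop (𝓝 0) := by
  obtain ⟨C, hC⟩ := hh.bounded_above_of_compact_support hhc
  have hexp : 0 < τ * finrank ℝ E - τ * finrank ℝ E / p :=
    sub_pos.2 (div_lt_self (by positivity) hp)
  have hdecay : Tendsto (fun l : ℝ => l ^ (τ * finrank ℝ E / p - τ * finrank ℝ E) * C *
      ∫ x, ‖g x‖ ∂μ) atTop (𝓝 0) := by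
    rw [← neg_sub]
    simpa using
      ((tendsto_rpow_neg_atTop hexp).mul_const C).mul_const (∫ x, ‖g x‖ ∂μ)
  exact squeeze_zero_norm' ((eventually_gt_atTop 0).mono fun l hl =>
    norm_integral_Rop_mul_conj_le_of_bound (hg.integrable_of_hasCompactSupport hgc) hC hl) hdecay

theorem exists_hasCompactSupport_norm_integral_Rop_mul_conj_sub_le (hpq : p.HolderConjugate q)
    (hf : MemLp f (.ofReal p) μ) (hw : MemLp w (.ofReal q) μ) {ε : ℝ} (hε : 0 < ε) :
    ∃ g h : E → ℂ, Continuous g ∧ HasCompactSupport g ∧ Continuous h ∧ HasCompactSupport h ∧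
      ∀ l > 0, ‖∫ x, Rop τ p x₀ ξ₀ l f x * conj (w x) ∂μ -
        ∫ x, Rop τ p x₀ ξ₀ l g x * conj (h x) ∂μ‖ ≤ ε := by
  have hsmall : ∀ a : ℝ, 0 ≤ a → ε / 2 / (a + 1) * a ≤ ε / 2 := fun a ha => by
    rw [div_mul_eq_mul_div, div_le_iff₀ (by positivity)]
    nlinarith
  obtain ⟨g, hgc, hfg, hg, hgp⟩ := hf.exists_hasCompactSupport_lpNorm_sub_le ENNReal.ofReal_ne_top
    (δ := ε / 2 / (lpNorm w (.ofReal q) μ + 1))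
    (by have := lpNorm_nonneg (f := w) (p := .ofReal q) (μ := μ); positivity)
  obtain ⟨h, hhc, hwh, hh, hhq⟩ := hw.exists_hasCompactSupport_lpNorm_sub_le ENNReal.ofReal_ne_top
    (δ := ε / 2 / (lpNorm g (.ofReal p) μ + 1))
    (by have := lpNorm_nonneg (f := g) (p := .ofReal p) (μ := μ); positivity)
  refine ⟨g, h, hg, hgc, hh, hhc, fun l hl => ?_⟩
  set W := lpNorm w (.ofReal q) μ
  set G := lpNorm g (.ofReal p) μ
  calc _ ≤ lpNorm (f - g) (.ofReal p) μ * W + G * lpNorm (w - h) (.ofReal q) μ :=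
        norm_integral_Rop_mul_conj_sub_le hpq hf hgp hw hhq hl
    _ ≤ ε / 2 / (W + 1) * W + ε / 2 / (G + 1) * G := by
        rw [mul_comm G]
        gcongr <;> exact lpNorm_nonneg
    _ ≤ ε := by linarith [hsmall W lpNorm_nonneg, hsmall G lpNorm_nonneg]

end

theorem Rop_pairing_tendsto_zero_general (n : ℕ) (hn : 1 ≤ n) (τ : ℝ) (hτ : 0 < τ)
    (x₀ ξ₀ : En n) (p q : ℝ) (hp : 1 < p) (hpq : 1 / p + 1 / q = 1)
    (u : Lp ℂ (ENNReal.ofReal p) (volume : Measure (En n)))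
    (v : Lp ℂ (ENNReal.ofReal q) (volume : Measure (En n))) :
    Tendsto (fun l : ℝ => ∫ (x : En n),
        (((l ^ (τ * n / p) : ℝ) : ℂ) * Complex.exp (Complex.I * ((l * ⟪x, ξ₀⟫ : ℝ) : ℂ)) *
          u ((l ^ τ : ℝ) • (x - x₀))) * (starRingEnd ℂ) (v x))
      atTop (nhds 0) := by
  have hpq' : p.HolderConjugate q :=
    Real.holderConjugate_iff.2 ⟨hp, by simpa only [one_div] using hpq⟩
  have hd : 0 < finrank ℝ (En n) := by rwa [finrank_euclideanSpace_fin]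
  refine tendsto_zero_of_forall_approx fun ε hε => ?_
  obtain ⟨g, h, hg, hgc, hh, hhc, hclose⟩ :=
    exists_hasCompactSupport_norm_integral_Rop_mul_conj_sub_le (τ := τ) (x₀ := x₀) (ξ₀ := ξ₀)
      hpq' (Lp.memLp u) (Lp.memLp v) hε
  refine ⟨_, tendsto_integral_Rop_mul_conj_of_hasCompactSupport (μ := volume) (x₀ := x₀) (ξ₀ := ξ₀)
    hτ hp hd hg hgc hh hhc,
    (eventually_gt_atTop 0).mono fun l hl => ?_⟩
  simpa only [Rop, finrank_euclideanSpace_fin] using hclose l hl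

/-- the pairing `(R_{λ,τ}(x₀,ξ₀)u, v)` tends to `0` as `λ → ∞`. -/
theorem Rop_pairing_tendsto_zero (n : ℕ) (hn : 1 ≤ n) (τ : ℝ) (hτ : 0 < τ)
    (x₀ ξ₀ : En n) (p q : ℝ) (hp : 1 < p) (hq : 1 < q) (hpq : 1 / p + 1 / q = 1)
    (u : Lp ℂ (ENNReal.ofReal p) (volume : Measure (En n)))
    (v : Lp ℂ (ENNReal.ofReal q) (volume : Measure (En n))) :
    Tendsto (fun l : ℝ => ∫ (x : En n),
        (((l ^ (τ * n / p) : ℝ) : ℂ) * Complex.exp (Complex.I * ((l * ⟪x, ξ₀⟫ : ℝ) : ℂ)) *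
          u ((l ^ τ : ℝ) • (x - x₀))) * (starRingEnd ℂ) (v x))
      atTop (nhds 0) :=
  Rop_pairing_tendsto_zero_general n hn τ hτ x₀ ξ₀ p q hp hpq u v
end

section
/- Let σ ∈ S^0_{ρ,Λ}, and for multi-indices α, β let p_{α,β}(σ) be a constant such that |(∂_x^α ∂_ξ^β σ)(x,ξ)| ≤ p_{α,β}(σ) Λ(ξ)^{−ρ|β|} for all x, ξ ∈ ℝⁿ. Suppose λ ≥ 1, 0 ≤ τ ≤ ρμ₀/(1 + ρμ₀) and ξ₀ ≠ 0, and set σ_{λ,τ}(x,η) = σ(x₀ + λ^{−τ}x, λξ₀ + λ^τ η) for a fixed x₀ ∈ ℝⁿ. Then for all multi-indices α and β there exists a constant C_β > 0, depending only on β, n, ρ, μ₀ and Λ (but not on λ, τ, x₀, ξ₀ or σ), such that |(∂_x^α ∂_η^β σ_{λ,τ})(x,η)| ≤ C_β p_{α,β}(σ) Λ(η)^{ρ|β|} |ξ₀|^{−ρμ₀|β|} λ^{−τ|α|} λ^{−(ρμ₀−(1+ρμ₀)τ)|β|} for all x, η ∈ ℝⁿ. -/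
open MeasureTheory Real Filter
open scoped RealInnerProductSpace BigOperators ENNReal

open scoped ContDiff

/-!
The chain rule for the affine substitution `(y, η) ↦ (x₀ + λ^{-τ} y, λξ₀ + λ^τ η)` turns
`∂_x^α ∂_η^β σ_{λ,τ}` into `λ^{-τ|α|} λ^{τ|β|} (∂_x^α ∂_ξ^β σ)(x₀ + λ^{-τ}x, ζ)` with
`ζ = λξ₀ + λ^τ η`. Since `λ^τ ≥ 1`, the Peetre-type inequality
`λ|ξ₀| ≤ λ^τ (1 + |η|) (1 + |ζ|)` together with `C₀ (1 + |ξ|)^{μ₀} ≤ Λ(ξ)`, used at `ζ` and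
at `η`, bounds `Λ(ζ)^{-ρ|β|}` by `C₀^{-2ρ|β|} Λ(η)^{ρ|β|} (λ|ξ₀|)^{-ρμ₀|β|} λ^{τρμ₀|β|}`.
-/

section IteratedOperators

variable {ι X Y : Type*}

theorem iterate_semiconj_of_mem {P : X → Prop} {D : X → X} {D' : Y → Y} {T : X → Y}
    (hP : ∀ x, P x → P (D x)) (hT : ∀ x, P x → T (D x) = D' (T x)) (k : ℕ) {x : X}
    (hx : P x) : T (D^[k] x) = D'^[k] (T x) := by
  induction k generalizing x with
  | zero => rfl
  | succ k ih =>
    rw [Function.iterate_succ_apply, Function.iterate_succ_apply, ih (hP x hx), hT x hx]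

theorem foldr_iterate_mem {P : X → Prop} {D : ι → X → X} (hP : ∀ i x, P x → P (D i x))
    (β : ι → ℕ) (L : List ι) {x : X} (hx : P x) :
    P (L.foldr (fun i g => (D i)^[β i] g) x) := by
  induction L with
  | nil => exact hx
  | cons i L ih => exact Function.Iterate.rec P ih (hP i) (β i)

theorem foldr_iterate_semiconj {P : X → Prop} {D : ι → X → X} {D' : ι → Y → Y} {T : X → Y}
    (hP : ∀ i x, P x → P (D i x)) (hT : ∀ i x, P x → T (D i x) = D' i (T x))
    (β : ι → ℕ) (L : List ι) {x : X} (hx : P x) :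
    T (L.foldr (fun i g => (D i)^[β i] g) x) = L.foldr (fun i g => (D' i)^[β i] g) (T x) := by
  induction L with
  | nil => rfl
  | cons i L ih =>
    rw [List.foldr_cons, List.foldr_cons,
      iterate_semiconj_of_mem (hP i) (hT i) _ (foldr_iterate_mem hP β L hx), ih]

theorem foldr_iterate_comp_of_commute {S : X → X} {D : ι → X → X}
    (hS : ∀ i, Function.Commute S (D i)) (β : ι → ℕ) (L : List ι) (x : X) :
    L.foldr (fun i g => (S ∘ D i)^[β i] g) x
      = S^[(L.map β).sum] (L.foldr (fun i g => (D i)^[β i] g) x) := by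
  induction L with
  | nil => rfl
  | cons i L ih =>
    rw [List.foldr_cons, List.foldr_cons, ih, (hS i).comp_iterate, Function.comp_apply,
      (((hS i).symm.iterate_left _).iterate_right _).eq, List.map_cons, List.sum_cons,
      Function.iterate_add_apply]

end IteratedOperators

section DirectionalDerivative

variable {E W F : Type*} [NormedAddCommGroup E] [NormedSpace ℝ E]
  [NormedAddCommGroup W] [NormedSpace ℝ W] [NormedAddCommGroup F] [NormedSpace ℝ F]

noncomputable def dirDeriv (v : W) (G : W → F) : W → F := fun w => fderiv ℝ G w v

theorem ContDiff.dirDeriv {G : W → F} (hG : ContDiff ℝ ∞ G) (v : W) :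
    ContDiff ℝ ∞ (dirDeriv v G) :=
  (hG.fderiv_right (m := ∞) le_rfl).clm_apply contDiff_const

theorem dirDeriv_smul (r : ℝ) (v : W) (G : W → F) : dirDeriv (r • v) G = r • dirDeriv v G := by
  funext w
  simp [dirDeriv]

theorem dirDeriv_const_smul (r : ℝ) (v : W) (G : W → F) :
    dirDeriv v (r • G) = r • dirDeriv v G := by
  funext w
  simp [dirDeriv, fderiv_const_smul_field]

theorem dirDeriv_comp_affine {G : W → F} (hG : Differentiable ℝ G) (A : E →L[ℝ] W) (b : W)
    (u : E) : dirDeriv u (fun y => G (b + A y)) = fun y => dirDeriv (A u) G (b + A y) := by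
  funext y
  have hcomp : HasFDerivAt (fun y => G (b + A y)) ((fderiv ℝ G (b + A y)).comp A) y :=
    (hG (b + A y)).hasFDerivAt.comp y (A.hasFDerivAt.const_add b)
  simp [dirDeriv, hcomp.fderiv]

end DirectionalDerivative

section MultiIndex

variable {n : ℕ} {W F : Type*} [NormedAddCommGroup W] [NormedSpace ℝ W]
  [NormedAddCommGroup F] [NormedSpace ℝ F]

/-- `∂^β` taken along the images `A eᵢ` of the coordinate directions; `mpd β` is the case
`A = id`. -/
noncomputable def mpdAlong (A : En n →L[ℝ] W) (β : Fin n → ℕ) (G : W → F) : W → F :=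
  (List.finRange n).foldr (fun i g => (dirDeriv (A (EuclideanSpace.single i 1)))^[β i] g) G

theorem ContDiff.mpdAlong {G : W → F} (hG : ContDiff ℝ ∞ G) (A : En n →L[ℝ] W)
    (β : Fin n → ℕ) : ContDiff ℝ ∞ (mpdAlong A β G) :=
  foldr_iterate_mem (fun _ _ h => h.dirDeriv _) β _ hG

theorem mpd_comp_affine {G : W → F} (hG : ContDiff ℝ ∞ G) (A : En n →L[ℝ] W) (b : W)
    (β : Fin n → ℕ) : mpd β (fun y => G (b + A y)) = fun x => mpdAlong A β G (b + A x) := by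
  unfold mpd mpdAlong
  exact (foldr_iterate_semiconj (D := fun i => dirDeriv (A (EuclideanSpace.single i 1)))
    (D' := pd) (T := fun G y => G (b + A y)) (fun _ _ h => h.dirDeriv _)
    (fun _ _ h => (dirDeriv_comp_affine (h.differentiable (by simp)) A b _).symm) β _ hG).symm

theorem mpdAlong_smul (r : ℝ) (A : En n →L[ℝ] W) (β : Fin n → ℕ) (G : W → F) :
    mpdAlong (r • A) β G = r ^ (∑ i, β i) • mpdAlong A β G := by
  have hsmul : ∀ v : W, dirDeriv (r • v) = (r • ·) ∘ dirDeriv (F := F) v := fun v => by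
    funext G
    exact dirDeriv_smul r v G
  simp only [mpdAlong, FunLike.coe_smul, Pi.smul_apply, hsmul]
  exact (foldr_iterate_comp_of_commute (S := (r • ·))
    (D := fun i => dirDeriv (A (EuclideanSpace.single i 1)))
    (fun i G => (dirDeriv_const_smul r _ G).symm) β _ G).trans
    (by rw [smul_iterate, Fin.sum_univ_def])

theorem mpdAlong_const_smul (r : ℝ) (A : En n →L[ℝ] W) (β : Fin n → ℕ) (G : W → F) :
    mpdAlong A β (r • G) = r • mpdAlong A β G :=
  (foldr_iterate_semiconj (D := fun i => dirDeriv (A (EuclideanSpace.single i 1)))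
    (D' := fun i => dirDeriv (A (EuclideanSpace.single i 1))) (P := fun _ => True)
    (T := (r • ·)) (fun _ _ _ => trivial) (fun _ G _ => (dirDeriv_const_smul r _ G).symm)
    β _ trivial).symm

end MultiIndex

section Symbols

variable {n : ℕ}

theorem mixpd_comp_affine {σ : En n → En n → ℂ}
    (hσ : ContDiff ℝ ∞ (fun q : En n × En n => σ q.1 q.2))
    (c e : ℝ) (x₀ ξ' : En n) (α β : Fin n → ℕ) (x η : En n) :
    mixpd α β (fun y η' => σ (x₀ + c • y) (ξ' + e • η')) x η
      = (c ^ (∑ i, α i) * e ^ (∑ i, β i) : ℝ) •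
          mpdAlong (.inl ℝ (En n) (En n)) α
            (mpdAlong (.inr ℝ (En n) (En n)) β (fun q => σ q.1 q.2)) (x₀ + c • x, ξ' + e • η) := by
  set H := mpdAlong (.inr ℝ (En n) (En n)) β (fun q : En n × En n => σ q.1 q.2)
  have hinner : ∀ y : En n, mpd β (fun η' => σ (x₀ + c • y) (ξ' + e • η')) η
      = (e ^ (∑ i, β i) • H)
          ((x₀, ξ' + e • η) + (c • ContinuousLinearMap.inl ℝ (En n) (En n)) y) := by
    intro y
    have hsubst : (fun η' => σ (x₀ + c • y) (ξ' + e • η'))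
        = fun η' => σ ((x₀ + c • y, ξ') + (e • ContinuousLinearMap.inr ℝ (En n) (En n)) η').1
            ((x₀ + c • y, ξ') + (e • ContinuousLinearMap.inr ℝ (En n) (En n)) η').2 := by
      funext η'
      simp
    rw [hsubst, mpd_comp_affine hσ, mpdAlong_smul]
    simp [H]
  have hH : ContDiff ℝ ∞ (e ^ (∑ i, β i) • H) := by
    simpa only [Pi.smul_def] using (hσ.mpdAlong _ β).const_smul (e ^ (∑ i, β i))
  rw [mixpd, funext hinner, mpd_comp_affine hH, mpdAlong_smul, mpdAlong_const_smul, smul_smul]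
  simp

theorem mixpd_eq_mpdAlong {σ : En n → En n → ℂ}
    (hσ : ContDiff ℝ ∞ (fun q : En n × En n => σ q.1 q.2)) (α β : Fin n → ℕ) (X Ξ : En n) :
    mixpd α β σ X Ξ = mpdAlong (.inl ℝ (En n) (En n)) α
      (mpdAlong (.inr ℝ (En n) (En n)) β (fun q => σ q.1 q.2)) (X, Ξ) := by
  simpa using mixpd_comp_affine hσ 1 1 0 0 α β X Ξ

theorem mixpd_rescale {σ : En n → En n → ℂ}
    (hσ : ContDiff ℝ ∞ (fun q : En n × En n => σ q.1 q.2))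
    (c e : ℝ) (x₀ ξ' : En n) (α β : Fin n → ℕ) (x η : En n) :
    mixpd α β (fun y η' => σ (x₀ + c • y) (ξ' + e • η')) x η
      = (c ^ (∑ i, α i) * e ^ (∑ i, β i) : ℝ) • mixpd α β σ (x₀ + c • x) (ξ' + e • η) := by
  rw [mixpd_comp_affine hσ, mixpd_eq_mpdAlong hσ]

end Symbols

section Weights

variable {E : Type*} [NormedAddCommGroup E] [NormedSpace ℝ E]

theorem norm_le_mul_one_add_norm_mul_one_add_norm {t : ℝ} (ht : 1 ≤ t) (v η : E) :
    ‖v‖ ≤ t * (1 + ‖η‖) * (1 + ‖v + t • η‖) := by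
  have htri : ‖v‖ ≤ ‖v + t • η‖ + t * ‖η‖ := by
    calc ‖v‖ = ‖(v + t • η) - t • η‖ := by rw [add_sub_cancel_right]
      _ ≤ ‖v + t • η‖ + ‖t • η‖ := norm_sub_le _ _
      _ = ‖v + t • η‖ + t * ‖η‖ := by rw [norm_smul, Real.norm_of_nonneg (by linarith)]
  nlinarith [norm_nonneg η, norm_nonneg (v + t • η),
    mul_nonneg (mul_nonneg (by linarith : (0 : ℝ) ≤ t) (norm_nonneg η)) (norm_nonneg (v + t • η))]

theorem one_add_norm_add_smul_rpow_neg_le {t q : ℝ} (ht : 1 ≤ t) (hq : 0 ≤ q) {v : E}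
    (hv : v ≠ 0) (η : E) :
    (1 + ‖v + t • η‖) ^ (-q) ≤ ‖v‖ ^ (-q) * (t * (1 + ‖η‖)) ^ q := by
  have hv' : 0 < ‖v‖ := norm_pos_iff.mpr hv
  have hinv : (1 + ‖v + t • η‖)⁻¹ ≤ t * (1 + ‖η‖) / ‖v‖ := by
    rw [inv_le_iff_one_le_mul₀ (by positivity), div_mul_eq_mul_div, one_le_div₀ hv']
    exact norm_le_mul_one_add_norm_mul_one_add_norm ht v η
  calc (1 + ‖v + t • η‖) ^ (-q) = ((1 + ‖v + t • η‖)⁻¹) ^ q := by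
        rw [Real.rpow_neg (by positivity), Real.inv_rpow (by positivity)]
    _ ≤ (t * (1 + ‖η‖) / ‖v‖) ^ q := Real.rpow_le_rpow (by positivity) hinv hq
    _ = ‖v‖ ^ (-q) * (t * (1 + ‖η‖)) ^ q := by
        rw [Real.div_rpow (by positivity) hv'.le, Real.rpow_neg hv'.le, div_eq_mul_inv, mul_comm]

variable {Λ : E → ℝ} {C₀ μ₀ : ℝ}

theorem rpow_neg_le_of_lower_bound (hΛ : ∀ ξ, C₀ * (1 + ‖ξ‖) ^ μ₀ ≤ Λ ξ) (hC₀ : 0 < C₀)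
    (hμ₀ : 0 ≤ μ₀) {p t : ℝ} (hp : 0 ≤ p) (ht : 1 ≤ t) {v : E} (hv : v ≠ 0) (η : E) :
    Λ (v + t • η) ^ (-p) ≤ C₀ ^ (-(2 * p)) * Λ η ^ p * ‖v‖ ^ (-(μ₀ * p)) * t ^ (μ₀ * p) := by
  set ζ := v + t • η
  have hζ : Λ ζ ^ (-p) ≤ C₀ ^ (-p) * (1 + ‖ζ‖) ^ (-(μ₀ * p)) := by
    calc Λ ζ ^ (-p) ≤ (C₀ * (1 + ‖ζ‖) ^ μ₀) ^ (-p) :=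
          Real.rpow_le_rpow_of_nonpos (by positivity) (hΛ ζ) (by linarith)
      _ = C₀ ^ (-p) * (1 + ‖ζ‖) ^ (-(μ₀ * p)) := by
          rw [Real.mul_rpow hC₀.le (by positivity), ← Real.rpow_mul (by positivity), mul_neg]
  have hη : (1 + ‖η‖) ^ (μ₀ * p) ≤ C₀ ^ (-p) * Λ η ^ p := by
    calc (1 + ‖η‖) ^ (μ₀ * p) = ((1 + ‖η‖) ^ μ₀) ^ p := Real.rpow_mul (by positivity) _ _
      _ ≤ (Λ η / C₀) ^ p :=
          Real.rpow_le_rpow (by positivity) ((le_div_iff₀ hC₀).mpr (by linarith [hΛ η])) hp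
      _ = C₀ ^ (-p) * Λ η ^ p := by
          rw [Real.div_rpow ((by positivity : 0 ≤ C₀ * (1 + ‖η‖) ^ μ₀).trans (hΛ η)) hC₀.le,
            Real.rpow_neg hC₀.le, div_eq_mul_inv, mul_comm]
  calc Λ ζ ^ (-p) ≤ C₀ ^ (-p) * (‖v‖ ^ (-(μ₀ * p)) * (t * (1 + ‖η‖)) ^ (μ₀ * p)) := by
        grw [hζ, one_add_norm_add_smul_rpow_neg_le ht (by positivity) hv η]
    _ = C₀ ^ (-p) * ‖v‖ ^ (-(μ₀ * p)) * t ^ (μ₀ * p) * (1 + ‖η‖) ^ (μ₀ * p) := by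
        rw [Real.mul_rpow (by positivity) (by positivity)]
        ring
    _ ≤ C₀ ^ (-p) * ‖v‖ ^ (-(μ₀ * p)) * t ^ (μ₀ * p) * (C₀ ^ (-p) * Λ η ^ p) := by
        gcongr
    _ = C₀ ^ (-(2 * p)) * Λ η ^ p * ‖v‖ ^ (-(μ₀ * p)) * t ^ (μ₀ * p) := by
        rw [show -(2 * p) = -p + -p by ring, Real.rpow_add hC₀]
        ring

theorem rpow_neg_rescaled_le_of_lower_bound (hΛ : ∀ ξ, C₀ * (1 + ‖ξ‖) ^ μ₀ ≤ Λ ξ)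
    (hC₀ : 0 < C₀) (hμ₀ : 0 ≤ μ₀) {ρ s l τ : ℝ} (hρ : 0 ≤ ρ) (hs : 0 ≤ s) (hl : 1 ≤ l)
    (hτ : 0 ≤ τ) {ξ₀ : E} (hξ₀ : ξ₀ ≠ 0) (η : E) :
    l ^ (τ * s) * Λ (l • ξ₀ + l ^ τ • η) ^ (-(ρ * s)) ≤
      C₀ ^ (-(2 * (ρ * s))) * Λ η ^ (ρ * s) * ‖ξ₀‖ ^ (-(ρ * μ₀ * s)) *
        l ^ (-((ρ * μ₀ - (1 + ρ * μ₀) * τ) * s)) := by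
  have hl0 : 0 < l := by linarith
  have hbound := rpow_neg_le_of_lower_bound hΛ hC₀ hμ₀ (mul_nonneg hρ hs)
    (Real.one_le_rpow hl hτ) (smul_ne_zero hl0.ne' hξ₀) η
  rw [norm_smul, Real.norm_of_nonneg hl0.le, Real.mul_rpow hl0.le (norm_nonneg _),
    ← Real.rpow_mul hl0.le] at hbound
  calc l ^ (τ * s) * Λ (l • ξ₀ + l ^ τ • η) ^ (-(ρ * s))
      ≤ l ^ (τ * s) * (C₀ ^ (-(2 * (ρ * s))) * Λ η ^ (ρ * s) *
          (l ^ (-(μ₀ * (ρ * s))) * ‖ξ₀‖ ^ (-(μ₀ * (ρ * s)))) * l ^ (τ * (μ₀ * (ρ * s)))) := by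
        gcongr
    _ = C₀ ^ (-(2 * (ρ * s))) * Λ η ^ (ρ * s) * ‖ξ₀‖ ^ (-(ρ * μ₀ * s)) *
          (l ^ (τ * s) * l ^ (-(μ₀ * (ρ * s))) * l ^ (τ * (μ₀ * (ρ * s)))) := by
        ring_nf
    _ = _ := by
        rw [← Real.rpow_add hl0, ← Real.rpow_add hl0]
        ring_nf

end Weights

theorem rescaled_symbol_estimate_general (n : ℕ) (Λ : En n → ℝ) (μ₀ μ₁ μ ρ : ℝ)
    (hw : IsWeight n Λ μ₀ μ₁ μ) (hρ : 0 < ρ) :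
    ∃ C : (Fin n → ℕ) → ℝ, (∀ β, 0 < C β) ∧
      ∀ σ : En n → En n → ℂ, ContDiff ℝ (⊤ : ℕ∞) (fun q : En n × En n => σ q.1 q.2) →
      ∀ pc : (Fin n → ℕ) → (Fin n → ℕ) → ℝ,
      (∀ (α β : Fin n → ℕ) (x ξ : En n),
        ‖mixpd α β σ x ξ‖ ≤ pc α β * Λ ξ ^ (-(ρ * ∑ i, (β i : ℝ)))) →
      ∀ l τ : ℝ, 1 ≤ l → 0 ≤ τ → τ ≤ ρ * μ₀ / (1 + ρ * μ₀) →
      ∀ x₀ ξ₀ : En n, ξ₀ ≠ 0 →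
      ∀ (α β : Fin n → ℕ) (x η : En n),
        ‖mixpd α β
            (fun y η' => σ (x₀ + (l ^ (-τ) : ℝ) • y) (l • ξ₀ + (l ^ τ : ℝ) • η')) x η‖ ≤
          C β * pc α β * Λ η ^ (ρ * ∑ i, (β i : ℝ)) *
            ‖ξ₀‖ ^ (-(ρ * μ₀ * ∑ i, (β i : ℝ))) *
            l ^ (-(τ * ∑ i, (α i : ℝ))) *
            l ^ (-((ρ * μ₀ - (1 + ρ * μ₀) * τ) * ∑ i, (β i : ℝ))) := by
  obtain ⟨C₀, _, hC₀, -, hgrowth⟩ := hw.growth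
  refine ⟨fun β => C₀ ^ (-(2 * (ρ * ∑ i, (β i : ℝ)))), fun β => by positivity, ?_⟩
  intro σ hσ pc hpc l τ hl hτ _ x₀ ξ₀ hξ₀ α β x η
  dsimp only
  have hl0 : 0 < l := by linarith
  have hpc0 : 0 ≤ pc α β :=
    nonneg_of_mul_nonneg_left ((norm_nonneg _).trans (hpc α β x x))
      (Real.rpow_pos_of_pos (hw.pos x) _)
  have hweight := rpow_neg_rescaled_le_of_lower_bound (fun ξ => (hgrowth ξ).1) hC₀ hw.hμ₀.le
    hρ.le (by positivity : 0 ≤ ∑ i, (β i : ℝ)) hl hτ hξ₀ η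
  rw [mixpd_rescale hσ, norm_smul, Real.norm_of_nonneg (by positivity), ← Real.rpow_natCast,
    ← Real.rpow_natCast, ← Real.rpow_mul hl0.le, ← Real.rpow_mul hl0.le]
  push_cast
  calc l ^ (-τ * ∑ i, (α i : ℝ)) * l ^ (τ * ∑ i, (β i : ℝ)) * ‖mixpd α β σ _ _‖
      ≤ l ^ (-τ * ∑ i, (α i : ℝ)) * pc α β * (l ^ (τ * ∑ i, (β i : ℝ)) *
          Λ (l • ξ₀ + l ^ τ • η) ^ (-(ρ * ∑ i, (β i : ℝ)))) := by
        grw [hpc]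
        exact le_of_eq (by ring_nf)
    _ ≤ _ := by
        grw [hweight]
        exact le_of_eq (by ring_nf)

/-- derivative estimates for the rescaled symbol `σ_{λ,τ}`, with constants
`C_β` depending only on `β` (and on `n`, `ρ`, `μ₀`, `Λ`), uniform in `σ, λ, τ, x₀, ξ₀, α`. -/
theorem rescaled_symbol_estimate (n : ℕ) (hn : 1 ≤ n) (Λ : En n → ℝ) (μ₀ μ₁ μ ρ : ℝ)
    (hw : IsWeight n Λ μ₀ μ₁ μ) (hρ : 0 < ρ) (hρμ : ρ ≤ 1 / μ) :
    ∃ C : (Fin n → ℕ) → ℝ, (∀ β, 0 < C β) ∧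
      ∀ σ : En n → En n → ℂ, ContDiff ℝ (⊤ : ℕ∞) (fun q : En n × En n => σ q.1 q.2) →
      ∀ pc : (Fin n → ℕ) → (Fin n → ℕ) → ℝ,
      (∀ (α β : Fin n → ℕ) (x ξ : En n),
        ‖mixpd α β σ x ξ‖ ≤ pc α β * Λ ξ ^ (-(ρ * ∑ i, (β i : ℝ)))) →
      ∀ l τ : ℝ, 1 ≤ l → 0 ≤ τ → τ ≤ ρ * μ₀ / (1 + ρ * μ₀) →
      ∀ x₀ ξ₀ : En n, ξ₀ ≠ 0 →
      ∀ (α β : Fin n → ℕ) (x η : En n),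
        ‖mixpd α β
            (fun y η' => σ (x₀ + (l ^ (-τ) : ℝ) • y) (l • ξ₀ + (l ^ τ : ℝ) • η')) x η‖ ≤
          C β * pc α β * Λ η ^ (ρ * ∑ i, (β i : ℝ)) *
            ‖ξ₀‖ ^ (-(ρ * μ₀ * ∑ i, (β i : ℝ))) *
            l ^ (-(τ * ∑ i, (α i : ℝ))) *
            l ^ (-((ρ * μ₀ - (1 + ρ * μ₀) * τ) * ∑ i, (β i : ℝ))) :=
  rescaled_symbol_estimate_general n Λ μ₀ μ₁ μ ρ hw hρ
end

section
/- Let σ ∈ M^0_{ρ,Λ} and let F : ℂ → ℂ be a C^∞ function (smooth as a function of two real variables). Then F ∘ σ ∈ M^0_{ρ,Λ}; that is, for every γ ∈ {0,1}ⁿ the function ξ^γ(∂_ξ^γ(F ∘ σ))(x,ξ) belongs to S^0_{ρ,Λ}: for all multi-indices α and β there exists C_{α,β} > 0 such that |∂_x^α ∂_ξ^β (ξ^γ ∂_ξ^γ (F ∘ σ))(x,ξ)| ≤ C_{α,β} Λ(ξ)^{−ρ|β|} for all x, ξ ∈ ℝⁿ. -/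
open MeasureTheory Real Filter
open scoped RealInnerProductSpace BigOperators ENNReal

/-!
A symbol `τ` lies in `S^0_{ρ,Λ}` exactly when its rescalings `(x, η) ↦ τ(x, ξ + Λ(ξ)^ρ η)` have all
derivatives at `(x, 0)` bounded uniformly in `(x, ξ)`: a derivative in `η` produces precisely the
factor `Λ(ξ)^{ρ|β|}` that the symbol estimate allows. By the Leibniz rule and the Faà di Bruno bound
this condition is stable under sums, products, real-linear maps and composition with smooth
functions. The Euler operators `ξ_i ∂_{ξ_i}` are derivations, and for `γ ∈ {0,1}ⁿ` the weighted
derivative `ξ^γ ∂_ξ^γ` is their product over the support of `γ`; so, by the chain rule,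
`ξ^γ ∂_ξ^γ (F ∘ σ)` is a sum of products of functions `G ∘ σ` (`G` smooth) with real-linear images
of `ξ^δ ∂_ξ^δ σ` for `δ ≤ γ`, each of which lies in `S^0_{ρ,Λ}` because `σ ∈ M^0_{ρ,Λ}`.
-/

open Function
open scoped ContDiff

noncomputable section

-- Core derives `BEq` for `Sum` but provides no `LawfulBEq` instance, which the `List.count`
-- lemmas need.
instance {α β : Type*} [BEq α] [LawfulBEq α] [BEq β] [LawfulBEq β] : LawfulBEq (α ⊕ β) where
  rfl {x} := by cases x <;> simp [BEq.beq, Sum.instBEq.beq]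
  eq_of_beq {x y} h := by cases x <;> cases y <;> simp_all [BEq.beq, Sum.instBEq.beq]

section IteratedDirDeriv

variable {E F : Type*} [NormedAddCommGroup E] [NormedSpace ℝ E]
  [NormedAddCommGroup F] [NormedSpace ℝ F]

def iteratedDirDeriv (l : List E) (f : E → F) : E → F :=
  l.foldr (fun v g x => fderiv ℝ g x v) f

@[simp] lemma iteratedDirDeriv_nil (f : E → F) : iteratedDirDeriv [] f = f := rfl

@[simp] lemma iteratedDirDeriv_cons (v : E) (l : List E) (f : E → F) :
    iteratedDirDeriv (v :: l) f = fun x => fderiv ℝ (iteratedDirDeriv l f) x v := rfl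

lemma iteratedDirDeriv_append (l₁ l₂ : List E) (f : E → F) :
    iteratedDirDeriv (l₁ ++ l₂) f = iteratedDirDeriv l₁ (iteratedDirDeriv l₂ f) :=
  List.foldr_append ..

lemma contDiff_fderiv_apply {f : E → F} (hf : ContDiff ℝ ∞ f) (v : E) :
    ContDiff ℝ ∞ (fun x => fderiv ℝ f x v) :=
  (hf.fderiv_right (by simp)).clm_apply contDiff_const

lemma contDiff_iteratedDirDeriv {f : E → F} (hf : ContDiff ℝ ∞ f) (l : List E) :
    ContDiff ℝ ∞ (iteratedDirDeriv l f) := by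
  induction l with
  | nil => exact hf
  | cons v l ih => exact contDiff_fderiv_apply ih v

lemma fderiv_fderiv_apply_comm {f : E → F} (hf : ContDiff ℝ ∞ f) (v w : E) (x : E) :
    fderiv ℝ (fun y => fderiv ℝ f y w) x v = fderiv ℝ (fun y => fderiv ℝ f y v) x w := by
  have hdf : DifferentiableAt ℝ (fderiv ℝ f) x :=
    (hf.fderiv_right (m := ∞) (by simp)).differentiable (by simp) x
  rw [fderiv_clm_apply hdf (differentiableAt_const _), fderiv_clm_apply hdf
    (differentiableAt_const _)]
  simpa using ((hf.contDiffAt (x := x)).isSymmSndFDerivAt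
    (by simp; exact WithTop.coe_le_coe.mpr le_top)).eq v w

lemma iteratedDirDeriv_perm {f : E → F} (hf : ContDiff ℝ ∞ f) {l₁ l₂ : List E}
    (hl : l₁.Perm l₂) : iteratedDirDeriv l₁ f = iteratedDirDeriv l₂ f := by
  induction hl with
  | nil => rfl
  | cons v _ ih => simp [ih]
  | swap v w l => funext x; exact fderiv_fderiv_apply_comm (contDiff_iteratedDirDeriv hf l) w v x
  | trans _ _ ih₁ ih₂ => rw [ih₁, ih₂]

lemma iteratedDirDeriv_ofFn {f : E → F} (hf : ContDiff ℝ ∞ f) {N : ℕ} (m : Fin N → E) :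
    iteratedDirDeriv (List.ofFn m) f = fun x => iteratedFDeriv ℝ N f x m := by
  induction N with
  | zero => funext x; simp [Subsingleton.elim m 0]
  | succ N ih =>
    funext x
    have hd : DifferentiableAt ℝ (iteratedFDeriv ℝ N f) x :=
      (hf.differentiable_iteratedFDeriv (by exact_mod_cast WithTop.coe_lt_top _)) x
    rw [List.ofFn_succ, iteratedDirDeriv_cons, ih, iteratedFDeriv_succ_apply_left]
    exact fderiv_continuousMultilinear_apply_const_apply hd _ _

lemma iteratedDirDeriv_comp_affine {G : Type*} [NormedAddCommGroup G] [NormedSpace ℝ G]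
    {f : E → F} (hf : ContDiff ℝ ∞ f) (A : G →L[ℝ] E) (b : E) (l : List G) (y : G) :
    iteratedDirDeriv l (fun y => f (b + A y)) y = iteratedDirDeriv (l.map A) f (b + A y) := by
  induction l generalizing y with
  | nil => rfl
  | cons v l ih =>
    have hd : DifferentiableAt ℝ (iteratedDirDeriv (l.map A) f) (b + A y) :=
      (contDiff_iteratedDirDeriv hf _).differentiable (by simp) _
    have hA : HasFDerivAt (fun y => b + A y) A y := A.hasFDerivAt.const_add b
    simp only [iteratedDirDeriv_cons, List.map_cons]
    rw [show iteratedDirDeriv l (fun y => f (b + A y))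
        = iteratedDirDeriv (l.map A) f ∘ fun y => b + A y from funext ih,
      (hd.hasFDerivAt.comp y hA).fderiv]
    rfl

end IteratedDirDeriv

lemma ContinuousMultilinearMap.norm_le_sum_apply_basis {ι E G : Type*} [Fintype ι]
    [NormedAddCommGroup E] [NormedSpace ℝ E] [NormedAddCommGroup G] [NormedSpace ℝ G]
    (b : Module.Basis ι ℝ E) (hb : ∀ v k, |b.repr v k| ≤ ‖v‖) {N : ℕ}
    (A : ContinuousMultilinearMap ℝ (fun _ : Fin N => E) G) :
    ‖A‖ ≤ ∑ d : Fin N → ι, ‖A fun j => b (d j)‖ := by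
  refine A.opNorm_le_bound (Finset.sum_nonneg fun _ _ => norm_nonneg _) fun m => ?_
  have hexp : A m = ∑ d : Fin N → ι, (∏ j, b.repr (m j) (d j)) • A fun j => b (d j) := by
    conv_lhs => rw [← funext fun j => b.sum_repr (m j), A.map_sum]
    exact Finset.sum_congr rfl fun d _ => A.map_smul_univ _ _
  rw [hexp, Finset.sum_mul]
  refine (norm_sum_le _ _).trans (Finset.sum_le_sum fun d _ => ?_)
  rw [norm_smul, mul_comm, Real.norm_eq_abs, Finset.abs_prod]
  exact mul_le_mul_of_nonneg_left
    (Finset.prod_le_prod (fun _ _ => abs_nonneg _) fun j _ => hb _ _) (norm_nonneg _)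

lemma List.prod_map_sumElim_one {ι κ : Type*} [Fintype κ] [DecidableEq ι] [DecidableEq κ]
    (t : ℝ) (l : List (ι ⊕ κ)) :
    (l.map (Sum.elim (fun _ => 1) fun _ => t)).prod = t ^ ∑ k, l.count (.inr k) := by
  induction l with
  | nil => simp
  | cons a l ih =>
    cases a with
    | inl i => simp [ih]
    | inr i =>
      simp only [List.map_cons, Sum.elim_inr, List.prod_cons, ih, List.count_cons,
        Finset.sum_add_distrib]
      simp [pow_succ, mul_comm]

lemma Real.rpow_pow_mul_rpow_zero_sub {a : ℝ} (ha : 0 < a) (ρ : ℝ) (k : ℕ) :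
    (a ^ ρ) ^ k * a ^ (0 - ρ * k) = 1 := by
  rw [← Real.rpow_natCast, ← Real.rpow_mul ha.le, ← Real.rpow_add ha]
  simp

lemma ContinuousLinearMap.apply_eq_re_add_im (L : ℂ →L[ℝ] ℂ) (w : ℂ) :
    L w = L 1 * (Complex.ofRealCLM.comp Complex.reCLM) w +
      L Complex.I * (Complex.ofRealCLM.comp Complex.imCLM) w := by
  conv_lhs => rw [← Complex.re_add_im w, ← mul_one (w.re : ℂ), ← Complex.real_smul,
    ← Complex.real_smul, map_add, map_smul, map_smul]
  simp [Complex.real_smul, mul_comm]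

namespace SymbolCalculus

section MultiIndex

variable {n : ℕ}

def multiIndexList (β : Fin n → ℕ) : List (Fin n) :=
  (List.finRange n).flatMap fun i => List.replicate (β i) i

lemma count_multiIndexList (β : Fin n → ℕ) (i : Fin n) : (multiIndexList β).count i = β i := by
  rw [multiIndexList, List.count_flatMap, List.sum_map_eq_nsmul_single i]
  · simp
  · intro j hj _
    simp [List.count_replicate, hj]

lemma mpd_eq_iteratedDirDeriv (β : Fin n → ℕ) (f : En n → ℂ) :
    mpd β f = iteratedDirDeriv ((multiIndexList β).map fun i => EuclideanSpace.single i 1) f := by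
  have hrep : ∀ (k : ℕ) (v : En n) (g : En n → ℂ),
      iteratedDirDeriv (List.replicate k v) g = (fun h x => fderiv ℝ h x v)^[k] g := by
    intro k v g
    induction k with
    | zero => rfl
    | succ k ih => rw [List.replicate_succ, iteratedDirDeriv_cons, ih, Function.iterate_succ_apply']
  rw [mpd, multiIndexList]
  induction List.finRange n with
  | nil => rfl
  | cons j l ih =>
    rw [List.foldr_cons, ih, List.flatMap_cons, List.map_append, iteratedDirDeriv_append,
      List.map_replicate, hrep]
    rfl

lemma mpd_zero (f : En n → ℂ) : mpd 0 f = f := by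
  have h : multiIndexList (0 : Fin n → ℕ) = [] := by simp [multiIndexList]
  rw [mpd_eq_iteratedDirDeriv, h]
  rfl

lemma pd_mpd {f : En n → ℂ} (hf : ContDiff ℝ ∞ f) (γ : Fin n → ℕ) (i : Fin n) :
    pd i (mpd γ f) = mpd (γ + Pi.single i 1) f := by
  have hperm : (multiIndexList (γ + Pi.single i 1)).Perm (i :: multiIndexList γ) := by
    rw [List.perm_iff_count]
    intro j
    rcases eq_or_ne j i with rfl | h
    · simp [count_multiIndexList]
    · simp [count_multiIndexList, h, h.symm]
  rw [mpd_eq_iteratedDirDeriv, mpd_eq_iteratedDirDeriv,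
    iteratedDirDeriv_perm hf (hperm.map _)]
  rfl

def mixedList (α β : Fin n → ℕ) : List (Fin n ⊕ Fin n) :=
  (multiIndexList α).map .inl ++ (multiIndexList β).map .inr

lemma count_inl_mixedList (α β : Fin n → ℕ) (i : Fin n) :
    (mixedList α β).count (.inl i) = α i := by
  rw [mixedList, List.count_append, List.count_map_of_injective _ _ Sum.inl_injective,
    count_multiIndexList, List.count_eq_zero.mpr (by simp), add_zero]

lemma count_inr_mixedList (α β : Fin n → ℕ) (i : Fin n) :
    (mixedList α β).count (.inr i) = β i := by
  rw [mixedList, List.count_append, List.count_map_of_injective _ _ Sum.inr_injective,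
    count_multiIndexList, List.count_eq_zero.mpr (by simp), zero_add]

lemma perm_mixedList (l : List (Fin n ⊕ Fin n)) :
    l.Perm (mixedList (fun i => l.count (.inl i)) (fun i => l.count (.inr i))) := by
  rw [List.perm_iff_count]
  rintro (i | i)
  · rw [count_inl_mixedList]
  · rw [count_inr_mixedList]

variable (n) in
def prodBasis : Module.Basis (Fin n ⊕ Fin n) ℝ (En n × En n) :=
  (EuclideanSpace.basisFun (Fin n) ℝ).toBasis.prod (EuclideanSpace.basisFun (Fin n) ℝ).toBasis

@[simp] lemma prodBasis_inl (i : Fin n) :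
    prodBasis n (.inl i) = (EuclideanSpace.single i 1, 0) := by
  simp [prodBasis]

@[simp] lemma prodBasis_inr (i : Fin n) :
    prodBasis n (.inr i) = (0, EuclideanSpace.single i 1) := by
  simp [prodBasis]

lemma norm_prodBasis (k : Fin n ⊕ Fin n) : ‖prodBasis n k‖ = 1 := by
  cases k <;> simp [Prod.norm_def]

lemma abs_prodBasis_repr_le (v : En n × En n) (k : Fin n ⊕ Fin n) :
    |(prodBasis n).repr v k| ≤ ‖v‖ := by
  cases k with
  | inl i => simpa [prodBasis] using (PiLp.norm_apply_le v.1 i).trans (norm_fst_le v)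
  | inr i => simpa [prodBasis] using (PiLp.norm_apply_le v.2 i).trans (norm_snd_le v)

lemma mixpd_eq_iteratedDirDeriv {τ : En n → En n → ℂ} (hτ : ContDiff ℝ ∞ (uncurry τ))
    (α β : Fin n → ℕ) (x ξ : En n) :
    mixpd α β τ x ξ = iteratedDirDeriv ((mixedList α β).map (prodBasis n)) (uncurry τ) (x, ξ) := by
  have hslot : ∀ y η : En n, mpd β (τ y) η = iteratedDirDeriv
      ((multiIndexList β).map (prodBasis n ∘ .inr)) (uncurry τ) (y, η) := by
    intro y η
    have h := iteratedDirDeriv_comp_affine hτ (.inr ℝ (En n) (En n)) (y, 0)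
      ((multiIndexList β).map fun i => EuclideanSpace.single i 1) η
    simp only [ContinuousLinearMap.inr_apply, Prod.mk_add_mk, add_zero, zero_add,
      List.map_map] at h
    rw [mpd_eq_iteratedDirDeriv, show τ y = fun η => uncurry τ (y, η) from rfl, h]
    congr 2
    funext i
    simp
  have h := iteratedDirDeriv_comp_affine
    (contDiff_iteratedDirDeriv hτ ((multiIndexList β).map (prodBasis n ∘ .inr)))
    (.inl ℝ (En n) (En n)) (0, ξ) ((multiIndexList α).map fun i => EuclideanSpace.single i 1) x
  simp only [ContinuousLinearMap.inl_apply, Prod.mk_add_mk, add_zero, zero_add,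
    List.map_map] at h
  rw [mixpd, show (fun y => mpd β (τ y) ξ) = fun y => iteratedDirDeriv
      ((multiIndexList β).map (prodBasis n ∘ .inr)) (uncurry τ) (y, ξ) from funext (hslot · ξ),
    mpd_eq_iteratedDirDeriv, h, ← iteratedDirDeriv_append, mixedList, List.map_append,
    List.map_map, List.map_map]
  congr 3
  funext i
  simp

lemma iteratedFDeriv_apply_prodBasis {τ : En n → En n → ℂ} (hτ : ContDiff ℝ ∞ (uncurry τ))
    {N : ℕ} (d : Fin N → Fin n ⊕ Fin n) (x ξ : En n) :
    iteratedFDeriv ℝ N (uncurry τ) (x, ξ) (fun j => prodBasis n (d j)) =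
      mixpd (fun i => (List.ofFn d).count (.inl i)) (fun i => (List.ofFn d).count (.inr i))
        τ x ξ := by
  rw [mixpd_eq_iteratedDirDeriv hτ, ← iteratedDirDeriv_perm hτ ((perm_mixedList _).map _),
    List.map_ofFn, iteratedDirDeriv_ofFn hτ]
  rfl

end MultiIndex

section Rescaling

variable {n : ℕ}

def rescale (Λ : En n → ℝ) (ρ : ℝ) (τ : En n → En n → ℂ) (ξ₀ : En n) : En n × En n → ℂ :=
  fun p => τ p.1 (ξ₀ + Λ ξ₀ ^ ρ • p.2)

def IsRescaledBounded (Λ : En n → ℝ) (ρ : ℝ) (τ : En n → En n → ℂ) : Prop :=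
  ContDiff ℝ ∞ (uncurry τ) ∧
    ∀ N : ℕ, ∃ C, ∀ x ξ : En n, ‖iteratedFDeriv ℝ N (rescale Λ ρ τ ξ) (x, 0)‖ ≤ C

variable {Λ : En n → ℝ} {ρ : ℝ} {τ : En n → En n → ℂ}

lemma contDiff_rescale (hτ : ContDiff ℝ ∞ (uncurry τ)) (ξ₀ : En n) :
    ContDiff ℝ ∞ (rescale Λ ρ τ ξ₀) :=
  hτ.comp (contDiff_fst.prodMk (contDiff_const.add (contDiff_snd.const_smul _)))

lemma iteratedFDeriv_rescale_apply_prodBasis (hτ : ContDiff ℝ ∞ (uncurry τ)) {N : ℕ}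
    (d : Fin N → Fin n ⊕ Fin n) (x ξ : En n) :
    iteratedFDeriv ℝ N (rescale Λ ρ τ ξ) (x, 0) (fun j => prodBasis n (d j)) =
      (Λ ξ ^ ρ) ^ (∑ i, (List.ofFn d).count (.inr i)) •
        mixpd (fun i => (List.ofFn d).count (.inl i)) (fun i => (List.ofFn d).count (.inr i))
          τ x ξ := by
  set t := Λ ξ ^ ρ
  let A : En n × En n →L[ℝ] En n × En n :=
    (ContinuousLinearMap.id ℝ (En n)).prodMap (t • ContinuousLinearMap.id ℝ (En n))
  have hA : ∀ k, A (prodBasis n k) = Sum.elim (fun _ => 1) (fun _ => t) k • prodBasis n k := by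
    rintro (i | i) <;> simp [A]
  have hsplit : rescale Λ ρ τ ξ = (fun p => uncurry τ ((0, ξ) + p)) ∘ A := by
    funext p
    simp [rescale, A, t, uncurry, add_comm]
  have hshift : ContDiff ℝ ∞ fun p => uncurry τ ((0, ξ) + p) :=
    hτ.comp (contDiff_const.add contDiff_id)
  rw [hsplit, A.iteratedFDeriv_comp_right hshift _ (WithTop.coe_le_coe.mpr le_top),
    iteratedFDeriv_comp_add_left, ContinuousMultilinearMap.compContinuousLinearMap_apply]
  simp only [hA, ContinuousMultilinearMap.map_smul_univ]
  rw [iteratedFDeriv_apply_prodBasis hτ, ← List.prod_map_sumElim_one, List.map_ofFn,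
    List.prod_ofFn]
  simp [A]

lemma isRescaledBounded_of_sClass_zero (hΛ : ∀ ξ, 0 < Λ ξ) (h : SClass Λ ρ 0 τ) :
    IsRescaledBounded Λ ρ τ := by
  obtain ⟨hτ, hb⟩ := h
  refine ⟨hτ, fun N => ?_⟩
  choose C _ hC using hb
  refine ⟨∑ d : Fin N → Fin n ⊕ Fin n, C (fun i => (List.ofFn d).count (.inl i))
    (fun i => (List.ofFn d).count (.inr i)), fun x ξ => ?_⟩
  refine (ContinuousMultilinearMap.norm_le_sum_apply_basis _ abs_prodBasis_repr_le _).trans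
    (Finset.sum_le_sum fun d _ => ?_)
  rw [iteratedFDeriv_rescale_apply_prodBasis hτ, norm_smul, Real.norm_eq_abs,
    abs_of_nonneg (pow_nonneg (Real.rpow_nonneg (hΛ ξ).le _) _)]
  calc _ ≤ (Λ ξ ^ ρ) ^ (∑ i, (List.ofFn d).count (.inr i)) *
        (C _ _ * Λ ξ ^ (0 - ρ * ∑ i, ((List.ofFn d).count (.inr i) : ℝ))) :=
        mul_le_mul_of_nonneg_left (hC _ _ x ξ) (pow_nonneg (Real.rpow_nonneg (hΛ ξ).le _) _)
    _ = C _ _ := by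
      rw [mul_left_comm, ← Nat.cast_sum, Real.rpow_pow_mul_rpow_zero_sub (hΛ ξ), mul_one]

lemma sClass_zero_of_isRescaledBounded (hΛ : ∀ ξ, 0 < Λ ξ) (h : IsRescaledBounded Λ ρ τ) :
    SClass Λ ρ 0 τ := by
  obtain ⟨hτ, hb⟩ := h
  refine ⟨hτ, fun α β => ?_⟩
  obtain ⟨C, hC⟩ := hb (mixedList α β).length
  refine ⟨max C 1, lt_of_lt_of_le one_pos (le_max_right _ _), fun x ξ => ?_⟩
  have key := iteratedFDeriv_rescale_apply_prodBasis (Λ := Λ) (ρ := ρ) hτ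
    (mixedList α β).get x ξ
  simp only [List.ofFn_get, count_inl_mixedList, count_inr_mixedList] at key
  have hle : (Λ ξ ^ ρ) ^ (∑ i, β i) * ‖mixpd α β τ x ξ‖ ≤ C := by
    have h := (iteratedFDeriv ℝ _ (rescale Λ ρ τ ξ) (x, 0)).le_opNorm
      fun j => prodBasis n ((mixedList α β).get j)
    rw [key, norm_smul, Real.norm_eq_abs,
      abs_of_nonneg (pow_nonneg (Real.rpow_nonneg (hΛ ξ).le _) _)] at h
    simp only [norm_prodBasis, Finset.prod_const_one, mul_one] at h
    exact h.trans (hC x ξ)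
  have hpos : 0 < Λ ξ ^ (0 - ρ * ∑ i, (β i : ℝ)) := Real.rpow_pos_of_pos (hΛ ξ) _
  calc ‖mixpd α β τ x ξ‖
      = (Λ ξ ^ ρ) ^ (∑ i, β i) * ‖mixpd α β τ x ξ‖ * Λ ξ ^ (0 - ρ * ∑ i, (β i : ℝ)) := by
        rw [mul_right_comm, ← Nat.cast_sum, Real.rpow_pow_mul_rpow_zero_sub (hΛ ξ), one_mul]
    _ ≤ max C 1 * Λ ξ ^ (0 - ρ * ∑ i, (β i : ℝ)) :=
        mul_le_mul_of_nonneg_right (hle.trans (le_max_left _ _)) hpos.le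

lemma sClass_zero_iff (hΛ : ∀ ξ, 0 < Λ ξ) : SClass Λ ρ 0 τ ↔ IsRescaledBounded Λ ρ τ :=
  ⟨isRescaledBounded_of_sClass_zero hΛ, sClass_zero_of_isRescaledBounded hΛ⟩

end Rescaling

namespace IsRescaledBounded

variable {n : ℕ} {Λ : En n → ℝ} {ρ : ℝ} {τ τ₁ τ₂ : En n → En n → ℂ}

lemma add (h₁ : IsRescaledBounded Λ ρ τ₁) (h₂ : IsRescaledBounded Λ ρ τ₂) :
    IsRescaledBounded Λ ρ fun x ξ => τ₁ x ξ + τ₂ x ξ := by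
  refine ⟨h₁.1.add h₂.1, fun N => ?_⟩
  obtain ⟨C₁, hC₁⟩ := h₁.2 N
  obtain ⟨C₂, hC₂⟩ := h₂.2 N
  refine ⟨C₁ + C₂, fun x ξ => ?_⟩
  rw [show rescale Λ ρ (fun x ξ => τ₁ x ξ + τ₂ x ξ) ξ =
      rescale Λ ρ τ₁ ξ + rescale Λ ρ τ₂ ξ from rfl,
    iteratedFDeriv_add_apply
      ((contDiff_rescale h₁.1 ξ).of_le (WithTop.coe_le_coe.mpr le_top)).contDiffAt
      ((contDiff_rescale h₂.1 ξ).of_le (WithTop.coe_le_coe.mpr le_top)).contDiffAt]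
  exact (norm_add_le _ _).trans (add_le_add (hC₁ x ξ) (hC₂ x ξ))

lemma mul (h₁ : IsRescaledBounded Λ ρ τ₁) (h₂ : IsRescaledBounded Λ ρ τ₂) :
    IsRescaledBounded Λ ρ fun x ξ => τ₁ x ξ * τ₂ x ξ := by
  refine ⟨h₁.1.mul h₂.1, fun N => ?_⟩
  choose C₁ hC₁ using h₁.2
  choose C₂ hC₂ using h₂.2
  refine ⟨∑ i ∈ Finset.range (N + 1), (N.choose i : ℝ) * C₁ i * C₂ (N - i), fun x ξ => ?_⟩
  refine (norm_iteratedFDeriv_mul_le (contDiff_rescale h₁.1 ξ) (contDiff_rescale h₂.1 ξ) _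
    (WithTop.coe_le_coe.mpr le_top)).trans (Finset.sum_le_sum fun i _ => ?_)
  have hC₁0 : 0 ≤ C₁ i := (norm_nonneg _).trans (hC₁ i x ξ)
  gcongr
  exacts [hC₁ i x ξ, hC₂ (N - i) x ξ]

lemma clm_comp (L : ℂ →L[ℝ] ℂ) (h : IsRescaledBounded Λ ρ τ) :
    IsRescaledBounded Λ ρ fun x ξ => L (τ x ξ) := by
  refine ⟨L.contDiff.comp h.1, fun N => ?_⟩
  obtain ⟨C, hC⟩ := h.2 N
  refine ⟨‖L‖ * C, fun x ξ => ?_⟩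
  rw [show rescale Λ ρ (fun x ξ => L (τ x ξ)) ξ = L ∘ rescale Λ ρ τ ξ from rfl,
    L.iteratedFDeriv_comp_left (contDiff_rescale h.1 ξ).contDiffAt
      (WithTop.coe_le_coe.mpr le_top)]
  exact (L.norm_compContinuousMultilinearMap_le _).trans
    (mul_le_mul_of_nonneg_left (hC x ξ) (norm_nonneg L))

lemma comp {F : ℂ → ℂ} (hF : ContDiff ℝ ∞ F) (h : IsRescaledBounded Λ ρ τ) :
    IsRescaledBounded Λ ρ fun x ξ => F (τ x ξ) := by
  refine ⟨hF.comp h.1, fun N => ?_⟩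
  choose C hC using h.2
  obtain ⟨K, hK⟩ := (isCompact_closedBall (0 : ℂ) (C 0)).exists_bound_of_continuousOn
    (continuous_finsetSum (Finset.range (N + 1)) fun i _ =>
      (hF.continuous_iteratedFDeriv (m := i) (WithTop.coe_le_coe.mpr le_top)).norm).continuousOn
  set D := 1 + ∑ i ∈ Finset.range (N + 1), |C i|
  refine ⟨N.factorial * K * D ^ N, fun x ξ => ?_⟩
  have hτx : rescale Λ ρ τ ξ (x, 0) ∈ Metric.closedBall (0 : ℂ) (C 0) := by
    simpa using hC 0 x ξ
  refine norm_iteratedFDeriv_comp_le hF (contDiff_rescale h.1 ξ) (WithTop.coe_le_coe.mpr le_top)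
    (x, 0) (fun i hi => ?_) (fun i hi hiN => ?_)
  · refine le_trans ?_ ((le_abs_self _).trans ((Real.norm_eq_abs _).symm.trans_le (hK _ hτx)))
    exact Finset.single_le_sum (f := fun i => ‖iteratedFDeriv ℝ i F (rescale Λ ρ τ ξ (x, 0))‖)
      (fun _ _ => norm_nonneg _) (Finset.mem_range.mpr (Nat.lt_succ_of_le hi))
  · calc _ ≤ C i := hC i x ξ
      _ ≤ D := (le_abs_self _).trans (le_add_of_nonneg_of_le zero_le_one
          (Finset.single_le_sum (f := fun i => |C i|) (fun _ _ => abs_nonneg _)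
            (Finset.mem_range.mpr (Nat.lt_succ_of_le hiN))))
      _ ≤ D ^ i := le_self_pow₀ (le_add_of_nonneg_right (Finset.sum_nonneg fun _ _ =>
          abs_nonneg _)) (Nat.one_le_iff_ne_zero.mp hi)

end IsRescaledBounded

section Euler

variable {n : ℕ}

def indicatorIndex (t : Finset (Fin n)) : Fin n → ℕ := fun j => if j ∈ t then 1 else 0

@[simp] lemma indicatorIndex_empty : indicatorIndex (∅ : Finset (Fin n)) = 0 := by
  funext j
  simp [indicatorIndex]

lemma indicatorIndex_insert {i : Fin n} {t : Finset (Fin n)} (hi : i ∉ t) :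
    indicatorIndex (insert i t) = indicatorIndex t + Pi.single i 1 := by
  funext j
  rcases eq_or_ne j i with rfl | h
  · simp [indicatorIndex, hi]
  · simp [indicatorIndex, h]

lemma indicatorIndex_singleton (i : Fin n) : indicatorIndex {i} = Pi.single i 1 := by
  funext j
  simp [indicatorIndex, Pi.single_apply]

lemma indicatorIndex_le_one (t : Finset (Fin n)) (j : Fin n) : indicatorIndex t j ≤ 1 := by
  unfold indicatorIndex
  split_ifs <;> simp

lemma eq_indicatorIndex {γ : Fin n → ℕ} (hγ : ∀ i, γ i ≤ 1) :
    γ = indicatorIndex (Finset.univ.filter fun i => γ i = 1) := by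
  funext j
  rcases Nat.le_one_iff_eq_zero_or_eq_one.mp (hγ j) with h | h <;> simp [indicatorIndex, h]

def weightedDeriv (γ : Fin n → ℕ) (τ : En n → En n → ℂ) : En n → En n → ℂ :=
  fun x ξ => ((∏ i, ξ i ^ γ i : ℝ) : ℂ) * mixpd 0 γ τ x ξ

def eulerOp (i : Fin n) (τ : En n → En n → ℂ) : En n → En n → ℂ :=
  fun x ξ => (ξ i : ℂ) * pd i (τ x) ξ

lemma weightedDeriv_apply (γ : Fin n → ℕ) (τ : En n → En n → ℂ) (x ξ : En n) :
    weightedDeriv γ τ x ξ = ((∏ i, ξ i ^ γ i : ℝ) : ℂ) * mpd γ (τ x) ξ := by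
  rw [weightedDeriv, mixpd, mpd_zero]

@[simp] lemma weightedDeriv_zero (τ : En n → En n → ℂ) : weightedDeriv 0 τ = τ := by
  funext x ξ
  simp [weightedDeriv_apply, mpd_zero]

lemma contDiff_monomial (γ : Fin n → ℕ) : ContDiff ℝ ∞ fun ξ : En n => ∏ i, ξ i ^ γ i :=
  contDiff_prod fun i _ => ((EuclideanSpace.proj i : En n →L[ℝ] ℝ).contDiff).pow _

lemma contDiff_weightedDeriv {τ : En n → En n → ℂ} (hτ : ContDiff ℝ ∞ (uncurry τ))
    (γ : Fin n → ℕ) : ContDiff ℝ ∞ (uncurry (weightedDeriv γ τ)) := by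
  have hmix : uncurry (mixpd 0 γ τ) = iteratedDirDeriv ((mixedList 0 γ).map (prodBasis n))
      (uncurry τ) := funext fun p => mixpd_eq_iteratedDirDeriv hτ 0 γ p.1 p.2
  have hmix' : ContDiff ℝ ∞ (uncurry (mixpd 0 γ τ)) := hmix ▸ contDiff_iteratedDirDeriv hτ _
  exact (Complex.ofRealCLM.contDiff.comp ((contDiff_monomial γ).comp contDiff_snd)).mul hmix'

lemma contDiff_of_contDiff_uncurry {τ : En n → En n → ℂ} (hτ : ContDiff ℝ ∞ (uncurry τ))
    (x : En n) : ContDiff ℝ ∞ (τ x) :=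
  hτ.comp (contDiff_prodMk_right x)

lemma differentiable_of_contDiff_uncurry {τ : En n → En n → ℂ}
    (hτ : ContDiff ℝ ∞ (uncurry τ)) (x : En n) : Differentiable ℝ (τ x) :=
  (contDiff_of_contDiff_uncurry hτ x).differentiable (by simp)

lemma pd_eq_zero_of_forall_add_smul {f : En n → ℂ} {i : Fin n} {ξ : En n}
    (hf : DifferentiableAt ℝ f ξ) (h : ∀ s : ℝ, f (ξ + s • EuclideanSpace.single i 1) = f ξ) :
    pd i f ξ = 0 := by
  rw [pd, ← hf.lineDeriv_eq_fderiv, lineDeriv, funext h, deriv_const]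

lemma pd_monomial {γ : Fin n → ℕ} {i : Fin n} (hγ : γ i = 0) (ξ : En n) :
    pd i (fun η : En n => ((∏ j, η j ^ γ j : ℝ) : ℂ)) ξ = 0 := by
  refine pd_eq_zero_of_forall_add_smul
    ((Complex.ofRealCLM.contDiff.comp (contDiff_monomial γ)).differentiable (by simp) ξ)
    fun s => ?_
  congr 1
  refine Finset.prod_congr rfl fun j _ => ?_
  rcases eq_or_ne j i with rfl | h
  · simp [hγ]
  · simp [h]

lemma eulerOp_weightedDeriv {τ : En n → En n → ℂ} (hτ : ContDiff ℝ ∞ (uncurry τ))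
    {γ : Fin n → ℕ} {i : Fin n} (hγ : γ i = 0) :
    eulerOp i (weightedDeriv γ τ) = weightedDeriv (γ + Pi.single i 1) τ := by
  funext x ξ
  have hmon : DifferentiableAt ℝ (fun η : En n => ((∏ j, η j ^ γ j : ℝ) : ℂ)) ξ :=
    (Complex.ofRealCLM.contDiff.comp (contDiff_monomial γ)).differentiable (by simp) ξ
  have hτx := contDiff_of_contDiff_uncurry hτ x
  have hmpd : DifferentiableAt ℝ (mpd γ (τ x)) ξ := by
    rw [mpd_eq_iteratedDirDeriv]
    exact (contDiff_iteratedDirDeriv hτx _).differentiable (by simp) ξ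
  have hprod : ∏ j, ξ j ^ (γ + Pi.single i 1 : Fin n → ℕ) j = ξ i * ∏ j, ξ j ^ γ j := by
    simp only [Pi.add_apply, pow_add, Finset.prod_mul_distrib, Pi.single_apply, pow_ite, pow_one,
      pow_zero, Finset.prod_ite_eq', Finset.mem_univ, if_true, mul_comm]
  have hpd : pd i (fun η => ((∏ j, η j ^ γ j : ℝ) : ℂ) * mpd γ (τ x) η) ξ =
      ((∏ j, ξ j ^ γ j : ℝ) : ℂ) * pd i (mpd γ (τ x)) ξ := by
    rw [pd, fderiv_fun_mul hmon hmpd, add_apply, smul_apply, smul_apply,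
      show fderiv ℝ (fun η : En n => ((∏ j, η j ^ γ j : ℝ) : ℂ)) ξ
        (EuclideanSpace.single i 1) = 0 from pd_monomial hγ ξ, smul_zero, add_zero, smul_eq_mul]
    rfl
  rw [eulerOp, show weightedDeriv γ τ x = fun η => ((∏ j, η j ^ γ j : ℝ) : ℂ) * mpd γ (τ x) η from
    funext (weightedDeriv_apply γ τ x), hpd, pd_mpd hτx, weightedDeriv_apply, hprod]
  push_cast
  ring

end Euler

section EulerTerms

variable {n : ℕ}

lemma eulerOp_add {τ₁ τ₂ : En n → En n → ℂ} (h₁ : ∀ x, Differentiable ℝ (τ₁ x))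
    (h₂ : ∀ x, Differentiable ℝ (τ₂ x)) (i : Fin n) :
    eulerOp i (fun x ξ => τ₁ x ξ + τ₂ x ξ) = fun x ξ => eulerOp i τ₁ x ξ + eulerOp i τ₂ x ξ := by
  funext x ξ
  rw [eulerOp, pd, fderiv_fun_add (h₁ x ξ) (h₂ x ξ), add_apply, mul_add]
  rfl

lemma eulerOp_mul {τ₁ τ₂ : En n → En n → ℂ} (h₁ : ∀ x, Differentiable ℝ (τ₁ x))
    (h₂ : ∀ x, Differentiable ℝ (τ₂ x)) (i : Fin n) :
    eulerOp i (fun x ξ => τ₁ x ξ * τ₂ x ξ) =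
      fun x ξ => eulerOp i τ₁ x ξ * τ₂ x ξ + τ₁ x ξ * eulerOp i τ₂ x ξ := by
  funext x ξ
  rw [eulerOp, pd, fderiv_fun_mul (h₁ x ξ) (h₂ x ξ), add_apply, smul_apply, smul_apply,
    smul_eq_mul, smul_eq_mul, eulerOp, eulerOp, pd, pd]
  ring

lemma eulerOp_comp {τ : En n → En n → ℂ} (h : ∀ x, Differentiable ℝ (τ x)) {G : ℂ → ℂ}
    (hG : Differentiable ℝ G) (i : Fin n) :
    eulerOp i (fun x ξ => G (τ x ξ)) = fun x ξ => fderiv ℝ G (τ x ξ) (eulerOp i τ x ξ) := by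
  funext x ξ
  rw [eulerOp, pd, show (fun η => G (τ x η)) = G ∘ τ x from rfl,
    fderiv_comp ξ (hG _) (h x ξ), eulerOp, ← Complex.real_smul, ← Complex.real_smul, map_smul]
  rfl

lemma eulerOp_clm_comp {τ : En n → En n → ℂ} (h : ∀ x, Differentiable ℝ (τ x))
    (L : ℂ →L[ℝ] ℂ) (i : Fin n) :
    eulerOp i (fun x ξ => L (τ x ξ)) = fun x ξ => L (eulerOp i τ x ξ) := by
  rw [eulerOp_comp h L.differentiable]
  simp

-- The terms produced by applying the Euler operators `ξ_i ∂_{ξ_i}`, `i ∈ s`, to functions `G ∘ σ`.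
inductive EulerTerm (σ : En n → En n → ℂ) (s : Finset (Fin n)) :
    (En n → En n → ℂ) → Prop
  | comp {G : ℂ → ℂ} (hG : ContDiff ℝ ∞ G) : EulerTerm σ s fun x ξ => G (σ x ξ)
  | mul_clm {T : En n → En n → ℂ} {t : Finset (Fin n)} (L : ℂ →L[ℝ] ℂ) (ht : t ⊆ s)
      (hT : EulerTerm σ s T) :
      EulerTerm σ s fun x ξ => T x ξ * L (weightedDeriv (indicatorIndex t) σ x ξ)
  | add {T₁ T₂ : En n → En n → ℂ} (h₁ : EulerTerm σ s T₁) (h₂ : EulerTerm σ s T₂) :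
      EulerTerm σ s fun x ξ => T₁ x ξ + T₂ x ξ

namespace EulerTerm

variable {σ T : En n → En n → ℂ} {s : Finset (Fin n)}

lemma mono {s' : Finset (Fin n)} (hss : s ⊆ s') (h : EulerTerm σ s T) : EulerTerm σ s' T := by
  induction h with
  | comp hG => exact comp hG
  | mul_clm L ht _ ih => exact mul_clm L (ht.trans hss) ih
  | add _ _ ih₁ ih₂ => exact ih₁.add ih₂

lemma contDiff (hσ : ContDiff ℝ ∞ (uncurry σ)) (h : EulerTerm σ s T) :
    ContDiff ℝ ∞ (uncurry T) := by
  induction h with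
  | comp hG => exact hG.comp hσ
  | mul_clm L _ _ ih => exact ih.mul (L.contDiff.comp (contDiff_weightedDeriv hσ _))
  | add _ _ ih₁ ih₂ => exact ih₁.add ih₂

lemma eulerOp (hσ : ContDiff ℝ ∞ (uncurry σ)) {i : Fin n} (hi : i ∉ s) (h : EulerTerm σ s T) :
    EulerTerm σ (insert i s) (SymbolCalculus.eulerOp i T) := by
  have hW : ∀ t, ∀ x, Differentiable ℝ (weightedDeriv (indicatorIndex t) σ x) := fun t =>
    differentiable_of_contDiff_uncurry (contDiff_weightedDeriv hσ _)
  induction h with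
  | @comp G hG =>
    have hσi : SymbolCalculus.eulerOp i σ = weightedDeriv (indicatorIndex {i}) σ := by
      simpa [indicatorIndex_singleton] using eulerOp_weightedDeriv hσ (γ := 0) (i := i) rfl
    have hsub : {i} ⊆ insert i s := Finset.singleton_subset_iff.mpr (Finset.mem_insert_self i s)
    have hsplit : (fun x ξ => fderiv ℝ G (σ x ξ) (weightedDeriv (indicatorIndex {i}) σ x ξ)) =
        fun x ξ => fderiv ℝ G (σ x ξ) 1 *
            (Complex.ofRealCLM.comp Complex.reCLM) (weightedDeriv (indicatorIndex {i}) σ x ξ) +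
          fderiv ℝ G (σ x ξ) Complex.I *
            (Complex.ofRealCLM.comp Complex.imCLM) (weightedDeriv (indicatorIndex {i}) σ x ξ) :=
      funext₂ fun x ξ => ContinuousLinearMap.apply_eq_re_add_im _ _
    rw [eulerOp_comp (differentiable_of_contDiff_uncurry hσ) (hG.differentiable (by simp)), hσi,
      hsplit]
    exact (mul_clm _ hsub (comp (contDiff_fderiv_apply hG 1))).add
      (mul_clm _ hsub (comp (contDiff_fderiv_apply hG Complex.I)))
  | @mul_clm T t L ht hT ih =>
    have hit : indicatorIndex t i = 0 := by simpa [indicatorIndex] using fun h => hi (ht h)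
    rw [eulerOp_mul (τ₂ := fun x ξ => L (weightedDeriv (indicatorIndex t) σ x ξ))
      (differentiable_of_contDiff_uncurry (hT.contDiff hσ))
      fun x => L.differentiable.comp (hW t x), eulerOp_clm_comp (hW t),
      eulerOp_weightedDeriv hσ hit, ← indicatorIndex_insert fun h => hi (ht h)]
    exact (mul_clm L (ht.trans (Finset.subset_insert i s)) ih).add
      (mul_clm L (Finset.insert_subset_insert i ht) (hT.mono (Finset.subset_insert i s)))
  | add h₁ h₂ ih₁ ih₂ =>
    rw [eulerOp_add (differentiable_of_contDiff_uncurry (h₁.contDiff hσ))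
      (differentiable_of_contDiff_uncurry (h₂.contDiff hσ))]
    exact ih₁.add ih₂

lemma isRescaledBounded {Λ : En n → ℝ} {ρ : ℝ}
    (hW : ∀ t, IsRescaledBounded Λ ρ (weightedDeriv (indicatorIndex t) σ)) (h : EulerTerm σ s T) :
    IsRescaledBounded Λ ρ T := by
  induction h with
  | comp hG => exact IsRescaledBounded.comp hG (by simpa using hW ∅)
  | mul_clm L _ _ ih => exact ih.mul ((hW _).clm_comp L)
  | add _ _ ih₁ ih₂ => exact ih₁.add ih₂

end EulerTerm

lemma eulerTerm_weightedDeriv_comp {σ : En n → En n → ℂ} (hσ : ContDiff ℝ ∞ (uncurry σ))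
    {G : ℂ → ℂ} (hG : ContDiff ℝ ∞ G) (s : Finset (Fin n)) :
    EulerTerm σ s (weightedDeriv (indicatorIndex s) fun x ξ => G (σ x ξ)) := by
  induction s using Finset.induction_on with
  | empty => simpa using EulerTerm.comp hG
  | insert i s hi ih =>
    rw [indicatorIndex_insert hi, ← eulerOp_weightedDeriv (τ := fun x ξ => G (σ x ξ)) (hG.comp hσ)
      (by simp [indicatorIndex, hi])]
    exact ih.eulerOp hσ hi

end EulerTerms

end SymbolCalculus

end

open SymbolCalculus

theorem comp_MClass_zero_general (n : ℕ) (Λ : En n → ℝ) (μ₀ μ₁ μ ρ : ℝ)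
    (hw : IsWeight n Λ μ₀ μ₁ μ)
    (σ : En n → En n → ℂ) (hσ : MClass Λ ρ 0 σ)
    (F : ℂ → ℂ) (hF : ContDiff ℝ (⊤ : ℕ∞) F) :
    MClass Λ ρ 0 (fun x ξ => F (σ x ξ)) := by
  have hW : ∀ t : Finset (Fin n), IsRescaledBounded Λ ρ (weightedDeriv (indicatorIndex t) σ) :=
    fun t => (sClass_zero_iff hw.pos).1 (hσ _ (indicatorIndex_le_one t))
  have hσs : ContDiff ℝ ∞ (uncurry σ) := by simpa using (hW ∅).1
  intro γ hγ
  rw [eq_indicatorIndex hγ]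
  exact (sClass_zero_iff hw.pos).2 ((eulerTerm_weightedDeriv_comp hσs hF _).isRescaledBounded hW)

/-- if `σ ∈ M^0_{ρ,Λ}` and `F : ℂ → ℂ` is smooth, then `F ∘ σ ∈ M^0_{ρ,Λ}`. -/
theorem comp_MClass_zero (n : ℕ) (hn : 1 ≤ n) (Λ : En n → ℝ) (μ₀ μ₁ μ ρ : ℝ)
    (hw : IsWeight n Λ μ₀ μ₁ μ) (hρ : 0 < ρ) (hρμ : ρ ≤ 1 / μ)
    (σ : En n → En n → ℂ) (hσ : MClass Λ ρ 0 σ)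
    (F : ℂ → ℂ) (hF : ContDiff ℝ (⊤ : ℕ∞) F) :
    MClass Λ ρ 0 (fun x ξ => F (σ x ξ)) :=
  comp_MClass_zero_general n Λ μ₀ μ₁ μ ρ hw σ hσ F hF
end
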